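/- arXiv:2409.16206 — 11 statements merged into one kernel-verified Lean document; each statement's English description precedes it below -/
import Mathlib

section
/- Let F be a field and let d ≥ 3 be an integer. Then no polynomial in F[x] of degree d is (d−1)-superirreducible over F. Equivalently: for every irreducible polynomial f ∈ F[x] of degree d, there exists a nonconstant polynomial g ∈ F[x] of degree at most d−1 such that the composition f(g(x)) is not irreducible in F[x]. -/
open Polynomial

/-! If `α` is a root of `f = a_d x^d + r(x)` in `F[x]/(f)`, then dividing `f(α) = 0` by `α^(d-1)`
writes `α = g(1/α)`, where `g = -(X^(d-1) r(1/X)) / a_d` has degree `d - 1` because `f(0) ≠ 0`.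
So `1/α` is a root of `f ∘ g`, which has degree `d(d-1)`, whereas every element of `F[x]/(f)`
has degree at most `d` over `F`; hence `f ∘ g` is reducible as soon as `d ≥ 3`. -/

/-- A polynomial `f ∈ R[x]` is `k`-superirreducible over `R` if it is irreducible and
`f(g(x))` is irreducible for every nonconstant `g ∈ R[x]` of degree at most `k`. -/
def IsSuperirreducible (R : Type*) [CommRing R] [IsDomain R] (k : ℕ) (f : Polynomial R) : Prop :=
  Irreducible f ∧ ∀ g : Polynomial R, 0 < g.natDegree → g.natDegree ≤ k →
    Irreducible (f.comp g)

namespace Polynomial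

theorem coeff_zero_ne_zero_of_irreducible {R : Type*} [CommRing R] [IsDomain R] {f : R[X]}
    (hf : Irreducible f) (hd : 2 ≤ f.natDegree) : f.coeff 0 ≠ 0 := fun h0 => by
  have := natDegree_le_of_dvd (irreducible_X.dvd_symm hf (X_dvd_iff.mpr h0)) X_ne_zero
  rw [natDegree_X] at this
  omega

variable {F K : Type*} [Field F] [Field K] [Algebra F K]

theorem natDegree_le_finrank_of_irreducible_of_aeval_eq_zero [Module.Finite F K] {p : F[X]}
    (hp : Irreducible p) {x : K} (hx : aeval x p = 0) : p.natDegree ≤ Module.finrank F K := by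
  rw [← natDegree_mul_leadingCoeff_inv p hp.ne_zero, minpoly.eq_of_irreducible hp hx]
  exact minpoly.natDegree_le x

theorem exists_natDegree_eq_aeval_inv_eq_of_aeval_eq_zero {f : F[X]} (h0 : f.coeff 0 ≠ 0)
    {a : K} (ha : aeval a f = 0) :
    ∃ g : F[X], g.natDegree = f.natDegree - 1 ∧ aeval a⁻¹ g = a := by
  have hf : f ≠ 0 := fun h => h0 (by simp [h])
  have hdeg : f.natDegree ≠ 0 := fun h => by
    rw [eq_C_of_natDegree_eq_zero h, aeval_C, map_eq_zero_iff _ (algebraMap F K).injective] at ha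
    exact h0 ha
  have ha0 : a ≠ 0 := by
    rintro rfl
    rw [← coeff_zero_eq_aeval_zero', map_eq_zero_iff _ (algebraMap F K).injective] at ha
    exact h0 ha
  set N := f.natDegree - 1
  set r := f.eraseLead
  have hr : r.natDegree ≤ N := eraseLead_natDegree_le f
  have hlc : -f.leadingCoeff⁻¹ ≠ 0 := by simpa using hf
  refine ⟨C (-f.leadingCoeff⁻¹) * reflect N r, ?_, ?_⟩
  · rw [natDegree_C_mul hlc]
    refine le_antisymm (natDegree_reflect_le.trans (max_le le_rfl hr)) (le_natDegree_of_ne_zero ?_)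
    rwa [coeff_reflect, revAt_le le_rfl, Nat.sub_self, eraseLead_coeff_of_ne 0 (Ne.symm hdeg)]
  · have : Invertible a := invertibleOfNonzero ha0
    have hrefl := eval₂_reflect_mul_pow (algebraMap F K) a N r hr
    rw [← aeval_def, ← aeval_def, invOf_eq_inv] at hrefl
    rw [← eraseLead_add_C_mul_X_pow f, map_add, ← hrefl, show f.natDegree = N + 1 by omega,
      map_mul, aeval_C, map_pow, aeval_X] at ha
    have hE : aeval a⁻¹ (reflect N r) = -(algebraMap F K f.leadingCoeff * a) := by
      have hmul : (aeval a⁻¹ (reflect N r) + algebraMap F K f.leadingCoeff * a) * a ^ N = 0 := by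
        linear_combination ha
      exact eq_neg_of_add_eq_zero_left ((mul_eq_zero.mp hmul).resolve_right (pow_ne_zero N ha0))
    have hlcK : algebraMap F K f.leadingCoeff ≠ 0 := by simpa using hf
    simp only [map_mul, aeval_C, map_neg, map_inv₀, hE]
    field_simp

end Polynomial

theorem no_superirreducible_of_degree_over_field (F : Type*) [Field F] (d : ℕ) (hd : 3 ≤ d)
    (f : Polynomial F) (hf : f.natDegree = d) :
    ¬ IsSuperirreducible F (d - 1) f := by
  rintro ⟨hirr, hcomp⟩
  have : Fact (Irreducible f) := ⟨hirr⟩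
  have hα : aeval (AdjoinRoot.root f) f = 0 := by rw [AdjoinRoot.aeval_eq, AdjoinRoot.mk_self]
  obtain ⟨g, hg, hgα⟩ := exists_natDegree_eq_aeval_inv_eq_of_aeval_eq_zero
    (coeff_zero_ne_zero_of_irreducible hirr (by omega)) hα
  have hroot : aeval (AdjoinRoot.root f)⁻¹ (f.comp g) = 0 := by
    rw [aeval_comp, hgα, hα]
  let pb := AdjoinRoot.powerBasis hirr.ne_zero
  have : Module.Finite F (AdjoinRoot f) := pb.finite
  have hle :=
    natDegree_le_finrank_of_irreducible_of_aeval_eq_zero (hcomp g (by omega) (hf ▸ hg.le)) hroot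
  rw [natDegree_comp, hg, pb.finrank, AdjoinRoot.powerBasis_dim, hf] at hle
  have : d - 1 ≤ 1 := Nat.le_of_mul_le_mul_left (by simpa using hle) (by omega)
  omega
end

section
/- For every integer d ≥ 3, there is no polynomial in ℚ[x] of degree d that is (d−1)-superirreducible over ℚ. Equivalently: for every irreducible f ∈ ℚ[x] with deg f = d ≥ 3, there exists a nonconstant g ∈ ℚ[x] of degree at most d−1 such that f(g(x)) is not irreducible in ℚ[x]. -/
/-!
Work over any infinite field `F`, with `f` irreducible of degree `d ≥ 3`.
Let `α` be a root of `f` and `β = α² + cα`, where `c` is chosen so that `-c - α` is not a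
conjugate of `α` (possible since `F` is infinite). Then `F(β) = F(α)`: otherwise
`X² + cX - β` would be the minimal polynomial of `α` over `F(β)`, and its other root
`-c - α` would be a conjugate of `α`. Hence `α = g(β)` with `deg g < deg β ≤ d`, and
`deg g ≥ 2` since `α` is not a root of a nonzero polynomial of degree at most `2`. Now `β`
is a root of `f ∘ g`, whose degree `d · deg g` exceeds `d ≥ deg β`, so `f ∘ g` is reducible.
-/

open Polynomial

open IntermediateField

section

variable {F K : Type*} [Field F] [Field K] [Algebra F K]

theorem Polynomial.exists_aeval_neg_algebraMap_sub_ne_zero [Infinite F] {p : F[X]} (hp : p ≠ 0)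
    (α : K) : ∃ c : F, aeval (-algebraMap F K c - α) p ≠ 0 := by
  have hinj : Function.Injective (fun c : F => -algebraMap F K c - α) := fun a b h => by
    simpa using h
  obtain ⟨c, hc⟩ := ((p.rootSet_finite K).preimage hinj.injOn).exists_notMem
  exact ⟨c, fun h => hc ((mem_rootSet_of_ne hp).2 h)⟩

theorem mem_adjoin_simple_sq_add_algebraMap_mul_self {α : K} (hα : IsIntegral F α) (c : F)
    (hc : aeval (-algebraMap F K c - α) (minpoly F α) ≠ 0) :
    α ∈ F⟮α ^ 2 + algebraMap F K c * α⟯ := by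
  set β := α ^ 2 + algebraMap F K c * α
  by_contra hα_notMem
  set E := F⟮β⟯
  set p : E[X] := X ^ 2 + C (algebraMap F E c) * X - C ⟨β, mem_adjoin_simple_self F β⟩ with hp
  have hp_root : ∀ x : K, x * (x + algebraMap F K c) = β → aeval x p = 0 := by
    intro x hx
    simp only [p, map_sub, map_add, map_mul, map_pow, aeval_X, aeval_C,
      ← IsScalarTower.algebraMap_apply]
    rw [IntermediateField.algebraMap_apply]
    linear_combination hx
  have hp_monic : p.Monic := by rw [hp]; monicity!
  have hp_natDegree : p.natDegree = 2 := by rw [hp]; compute_degree!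
  have hαE_int : IsIntegral E α := hα.tower_top
  have hmin : minpoly E α = p := by
    refine (eq_of_monic_of_dvd_of_natDegree_le (minpoly.monic hαE_int) hp_monic
      (minpoly.dvd E α (hp_root α (by ring))) ?_).symm
    rw [hp_natDegree, minpoly.two_le_natDegree_iff hαE_int]
    rintro ⟨y, hy⟩
    exact hα_notMem (hy ▸ y.2)
  apply hc
  rw [← aeval_map_algebraMap E]
  refine aeval_eq_zero_of_dvd_aeval_eq_zero (minpoly.dvd_map_of_isScalarTower F E α) ?_
  rw [hmin]
  exact hp_root _ (by ring)

theorem exists_aeval_eq_of_mem_adjoin_simple {α β : K} (hβ : IsIntegral F β)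
    (h : α ∈ F⟮β⟯) :
    ∃ g : F[X], g.natDegree < (minpoly F β).natDegree ∧ aeval β g = α := by
  rw [← mem_toSubalgebra, adjoin_simple_toSubalgebra_of_isAlgebraic hβ.isAlgebraic,
    Algebra.adjoin_singleton_eq_range_aeval] at h
  obtain ⟨g, rfl⟩ := h
  exact ⟨g %ₘ minpoly F β, natDegree_modByMonic_lt g (minpoly.monic hβ) (minpoly.ne_one F β),
    aeval_modByMonic_eq_self_of_root (minpoly.aeval F β)⟩

theorem natDegree_minpoly_le_of_aeval_sq_add_algebraMap_mul_self_eq (g : F[X]) (c : F) {α : K}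
    (h : aeval (α ^ 2 + algebraMap F K c * α) g = α) :
    (minpoly F α).natDegree ≤ max (2 * g.natDegree) 1 := by
  have hquad : (X ^ 2 + C c * X : F[X]).natDegree = 2 := by compute_degree!
  set q := g.comp (X ^ 2 + C c * X) - X
  have hq_root : aeval α q = 0 := by simp [q, aeval_comp, h]
  have hq_ne_zero : q ≠ 0 := fun hq => by
    have := congrArg natDegree (sub_eq_zero.1 hq)
    rw [natDegree_comp, hquad, natDegree_X] at this
    omega
  calc (minpoly F α).natDegree ≤ q.natDegree :=
        natDegree_le_of_dvd (minpoly.dvd F α hq_root) hq_ne_zero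
    _ ≤ max (2 * g.natDegree) 1 := by
      refine (natDegree_sub_le _ _).trans ?_
      rw [natDegree_comp, hquad, natDegree_X, mul_comm]

theorem Irreducible.natDegree_eq_natDegree_minpoly {p : F[X]} (hp : Irreducible p) {x : K}
    (hx : aeval x p = 0) : p.natDegree = (minpoly F x).natDegree := by
  rw [minpoly.Irreducible.eq_minpoly hp hx, natDegree_C_mul (leadingCoeff_ne_zero.2 hp.ne_zero)]

theorem not_isSuperirreducible_natDegree_sub_one [Infinite F] {f : F[X]} (hf : 3 ≤ f.natDegree) :
    ¬ IsSuperirreducible F (f.natDegree - 1) f := by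
  rintro ⟨hirr, hsup⟩
  have : Fact (Irreducible f) := ⟨hirr⟩
  set pb := AdjoinRoot.powerBasis hirr.ne_zero
  have : Module.Finite F (AdjoinRoot f) := pb.finite
  have hdim : pb.dim = f.natDegree := AdjoinRoot.powerBasis_dim _
  have hα_deg : (minpoly F (AdjoinRoot.root f)).natDegree = f.natDegree :=
    AdjoinRoot.powerBasis_gen hirr.ne_zero ▸ pb.natDegree_minpoly.trans hdim
  set α := AdjoinRoot.root f
  have hα : IsIntegral F α := AdjoinRoot.isIntegral_root hirr.ne_zero
  have hfα : aeval α f = 0 := (AdjoinRoot.aeval_eq f).trans AdjoinRoot.mk_self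
  obtain ⟨c, hc⟩ := exists_aeval_neg_algebraMap_sub_ne_zero (minpoly.ne_zero hα) α
  set β := α ^ 2 + algebraMap F _ c * α
  obtain ⟨g, hg_lt, hgβ⟩ := exists_aeval_eq_of_mem_adjoin_simple
    (Algebra.IsIntegral.isIntegral β) (mem_adjoin_simple_sq_add_algebraMap_mul_self hα c hc)
  have hβ : (minpoly F β).natDegree ≤ f.natDegree :=
    (minpoly.natDegree_le β).trans_eq (pb.finrank.trans hdim)
  have hg : 2 ≤ g.natDegree := by
    have := natDegree_minpoly_le_of_aeval_sq_add_algebraMap_mul_self_eq g c hgβ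
    rw [hα_deg] at this
    omega
  have hcomp := hsup g (by omega) (by omega)
  have hcomp_deg := hcomp.natDegree_eq_natDegree_minpoly (x := β) (by rw [aeval_comp, hgβ, hfα])
  rw [natDegree_comp] at hcomp_deg
  nlinarith

end

theorem no_superirreducible_of_degree_over_rat (d : ℕ) (hd : 3 ≤ d)
    (f : Polynomial ℚ) (hf : f.natDegree = d) :
    ¬ IsSuperirreducible ℚ (d - 1) f := by
  subst hf
  exact not_isSuperirreducible_natDegree_sub_one hd
end

section
/- For every integer d ≥ 3, there is no polynomial in ℤ[x] of degree d that is (d−1)-superirreducible over ℤ. Equivalently: for every irreducible f ∈ ℤ[x] with deg f = d ≥ 3, there exists a nonconstant g ∈ ℤ[x] of degree at most d−1 such that f(g(x)) is not irreducible in ℤ[x]. -/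
open Polynomial

theorem no_superirreducible_of_degree_over_int (d : ℕ) (hd : 3 ≤ d)
    (f : Polynomial ℤ) (hf : f.natDegree = d) :
    ¬ IsSuperirreducible ℤ (d - 1) f := by
  rintro ⟨hirr, hcomp⟩
  -- f - C a is never zero since deg f ≥ 3
  have hne : ∀ a : ℤ, f - C a ≠ 0 := by
    intro a h
    have hfa : f = C a := by
      have := sub_eq_zero.mp h
      simpa using this
    rw [hfa, natDegree_C] at hf
    omega
  -- choose c with f.eval c ≠ 1 and ≠ -1
  have hfin : ({c : ℤ | (f - C 1).IsRoot c} ∪ {c : ℤ | (f - C (-1)).IsRoot c}).Finite :=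
    (Polynomial.finite_setOf_isRoot (hne 1)).union (Polynomial.finite_setOf_isRoot (hne (-1)))
  obtain ⟨c, hc⟩ := hfin.infinite_compl.nonempty
  have hc1 : f.eval c ≠ 1 := by
    intro h
    exact hc (Or.inl (by simp [Polynomial.IsRoot, h]))
  have hc2 : f.eval c ≠ -1 := by
    intro h
    exact hc (Or.inr (by simp [Polynomial.IsRoot, h]))
  have hnat : (f.eval c).natAbs ≠ 1 := by
    intro h
    rcases Int.natAbs_eq_iff.mp h with h' | h' <;> simp_all
  obtain ⟨p, hp, hpd⟩ := Int.exists_prime_and_dvd hnat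
  set g : Polynomial ℤ := C p * X + C c with hg
  have hgdeg : g.natDegree = 1 := Polynomial.natDegree_linear hp.ne_zero
  have hIg := hcomp g (by omega) (by omega)
  -- C p divides f.comp g
  have hdvd : C p ∣ f.comp g := by
    rw [Polynomial.C_dvd_iff_dvd_coeff]
    intro i
    have hmap : ((f.comp g).map (Int.castRingHom (ZMod p.natAbs))).coeff i = 0 := by
      rw [Polynomial.map_comp]
      have hp0 : ((p : ℤ) : ZMod p.natAbs) = 0 := by
        rw [ZMod.intCast_zmod_eq_zero_iff_dvd]
        exact Int.natAbs_dvd.mpr dvd_rfl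
      have hgm : g.map (Int.castRingHom (ZMod p.natAbs)) = C ((c : ZMod p.natAbs)) := by
        simp only [hg, Polynomial.map_add, Polynomial.map_mul, Polynomial.map_C,
          Polynomial.map_X, Int.coe_castRingHom, hp0, map_zero, Polynomial.C_0, zero_mul,
          zero_add]
      rw [hgm, Polynomial.comp_C]
      have : ((f.eval c : ℤ) : ZMod p.natAbs) = 0 := by
        rw [ZMod.intCast_zmod_eq_zero_iff_dvd]
        exact Int.natAbs_dvd.mpr hpd
      have heval : (f.map (Int.castRingHom (ZMod p.natAbs))).eval ((c : ZMod p.natAbs)) =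
          ((f.eval c : ℤ) : ZMod p.natAbs) := by
        simp [Polynomial.eval_map, Polynomial.eval₂_at_intCast]
      rw [heval, this]
      simp
    rw [Polynomial.coeff_map] at hmap
    have := (ZMod.intCast_zmod_eq_zero_iff_dvd _ _).mp hmap
    exact Int.natAbs_dvd.mp this
  obtain ⟨h, hh⟩ := hdvd
  rcases hIg.isUnit_or_isUnit hh with hu | hu
  · exact hp.not_unit (Polynomial.isUnit_C.mp hu)
  · have h1 := Polynomial.natDegree_eq_zero_of_isUnit hu
    have h2 := Polynomial.natDegree_mul_le (p := C p) (q := h)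
    rw [Polynomial.natDegree_C, h1] at h2
    have hdeg : (f.comp g).natDegree ≤ 0 := by rw [hh]; omega
    rw [Polynomial.natDegree_comp, hgdeg, hf] at hdeg
    omega
end

section
/- Let f ∈ ℚ[x] be a monic irreducible polynomial of degree d, let K be a field extension of ℚ and α ∈ K a root of f with K = ℚ(α) (i.e. K is generated over ℚ by α). Let g ∈ ℚ[t] be a polynomial of degree 2. Then the composition f(g(t)) is not irreducible in ℚ[t] if and only if there exists β ∈ K with g(β) = α. -/
/-!
If `g(β) = α` for some `β ∈ K`, then `f ∘ g` has the root `β` in `K`, a field of degree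
`deg f`, while `deg (f ∘ g) = 2 deg f`; so `f ∘ g` cannot be irreducible. Conversely, if
`g(t) - α` has no root in `K`, then for every root `x` of `f` the quadratic `g(t) - x` has no root
in `ℚ(x)`, which embeds into `K` via `x ↦ α`; so it is irreducible over `ℚ(x)`, and Capelli's
lemma (`Polynomial.irreducible_comp`) makes `f ∘ g` irreducible.
-/

open Polynomial IntermediateField

namespace Polynomial

theorem scaleRoots_comp_C_mul {R : Type*} [CommSemiring R] (p q : R[X]) (s : R) :
    (p.scaleRoots s).comp (C s * q) = C s ^ p.natDegree * p.comp q := by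
  rw [comp, comp, scaleRoots_eval₂_mul]

variable {F K : Type*} [Field F] [Field K] [Algebra F K]

theorem _root_.Irreducible.scaleRoots {p : F[X]} (hp : Irreducible p) {s : F} (hs : s ≠ 0) :
    Irreducible (p.scaleRoots s) := by
  have : Invertible s⁻¹ := invertibleOfNonzero (inv_ne_zero hs)
  have hcomp : Irreducible (p.comp (C s⁻¹ * X)) := by
    simpa [← comp_eq_aeval] using
      (MulEquiv.irreducible_iff (algEquivCMulXAddC s⁻¹ 0).toMulEquiv).mpr hp
  have h := scaleRoots_comp_C_mul p (C s⁻¹ * X) s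
  rw [← mul_assoc, ← C_mul, mul_inv_cancel₀ hs, C_1, one_mul, comp_X] at h
  rwa [h, irreducible_isUnit_mul ((isUnit_C.mpr (Ne.isUnit hs)).pow _)]

theorem not_irreducible_of_finrank_lt_natDegree [FiniteDimensional F K] {p : F[X]}
    (hp : Module.finrank F K < p.natDegree) {β : K} (hβ : aeval β p = 0) : ¬ Irreducible p :=
  fun hirr ↦ by
    rw [minpoly.Irreducible.eq_minpoly hirr hβ,
      natDegree_C_mul (leadingCoeff_ne_zero.mpr hirr.ne_zero)] at hp
    exact (minpoly.natDegree_le β).not_gt hp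

theorem irreducible_map_sub_C_of_forall_aeval_ne {L : Type*} [Field L] [Algebra F L] {g : F[X]}
    (hg : g.natDegree = 2) {a : L} (h : ∀ z : L, aeval z g ≠ a) :
    Irreducible (g.map (algebraMap F L) - C a) := by
  have hdeg : (g.map (algebraMap F L) - C a).natDegree = 2 := by
    rw [natDegree_sub_C, natDegree_map, hg]
  refine irreducible_of_degree_le_three_of_not_isRoot (by simp [hdeg]) fun z hz ↦ h z ?_
  rwa [IsRoot, eval_sub, eval_C, eval_map_algebraMap, sub_eq_zero] at hz

theorem irreducible_comp_of_monic_of_forall_aeval_ne {f g : F[X]} (hf : f.Monic)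
    (hirr : Irreducible f) (hgm : g.Monic) (hg : g.natDegree = 2) {α : K} (hα : aeval α f = 0)
    (hno : ∀ β : K, aeval β g ≠ α) : Irreducible (f.comp g) := by
  refine irreducible_comp hf hgm hirr fun E _ _ x hx ↦
    irreducible_map_sub_C_of_forall_aeval_ne hg fun z hz ↦ ?_
  have hxint : IsIntegral F x := ⟨f, hf, hx ▸ minpoly.aeval F x⟩
  let ψ : F⟮x⟯ →ₐ[F] K := (algHomAdjoinIntegralEquiv F hxint).symm
    ⟨α, by rw [hx, mem_aroots]; exact ⟨hirr.ne_zero, hα⟩⟩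
  refine hno (ψ z) ?_
  rw [aeval_algHom_apply, hz, algHomAdjoinIntegralEquiv_symm_apply_gen]

theorem irreducible_comp_of_forall_aeval_ne {f g : F[X]} (hf : f.Monic) (hirr : Irreducible f)
    (hg : g.natDegree = 2) {α : K} (hα : aeval α f = 0) (hno : ∀ β : K, aeval β g ≠ α) :
    Irreducible (f.comp g) := by
  have hg0 : g ≠ 0 := by rintro rfl; simp at hg
  set c := g.leadingCoeff
  have hc : c⁻¹ ≠ 0 := inv_ne_zero (leadingCoeff_ne_zero.mpr hg0)
  have hgm : (C c⁻¹ * g).Monic := mul_comm g _ ▸ monic_mul_leadingCoeff_inv hg0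
  have hcg : ∀ β : K, aeval β (C c⁻¹ * g) ≠ algebraMap F K c⁻¹ * α := fun β h ↦ by
    rw [aeval_mul, aeval_C] at h
    exact hno β (mul_left_cancel₀ ((_root_.map_ne_zero _).mpr hc) h)
  -- Capelli's lemma needs `g` monic: `f.scaleRoots c⁻¹ = c⁻ᵈ f(c X)` composed with `g / c`
  -- is `f ∘ g` up to a unit.
  have key := irreducible_comp_of_monic_of_forall_aeval_ne ((monic_scaleRoots_iff _).mpr hf)
    (hirr.scaleRoots hc) hgm (by rw [natDegree_C_mul hc, hg]) (scaleRoots_aeval_eq_zero hα) hcg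
  rwa [scaleRoots_comp_C_mul, irreducible_isUnit_mul ((isUnit_C.mpr hc.isUnit).pow _)] at key

theorem not_irreducible_comp_of_aeval_eq {f g : F[X]} (hf : f ≠ 0) {α : K} (hα : aeval α f = 0)
    (hgen : Algebra.adjoin F {α} = ⊤) (hg : 1 < g.natDegree) {β : K} (hβ : aeval β g = α) :
    ¬ Irreducible (f.comp g) := by
  have hint : IsIntegral F α := IsAlgebraic.isIntegral ⟨f, hf, hα⟩
  let pb := PowerBasis.ofAdjoinEqTop' hint hgen
  have : FiniteDimensional F K := pb.finite
  have hK : Module.finrank F K ≤ f.natDegree := by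
    rw [pb.finrank, PowerBasis.ofAdjoinEqTop'_dim]
    exact natDegree_le_of_dvd (minpoly.dvd F α hα) hf
  refine not_irreducible_of_finrank_lt_natDegree (K := K) ?_ (by rw [aeval_comp, hβ, hα])
  rw [natDegree_comp]
  calc Module.finrank F K < Module.finrank F K * g.natDegree :=
        lt_mul_of_one_lt_right Module.finrank_pos hg
    _ ≤ f.natDegree * g.natDegree := Nat.mul_le_mul_right _ hK

end Polynomial

theorem comp_quadratic_not_irreducible_iff_root_general (f : Polynomial ℚ) (hmonic : f.Monic)
    (hirr : Irreducible f)
    (K : Type*) [Field K] [Algebra ℚ K] (α : K) (hroot : Polynomial.aeval α f = 0)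
    (hgen : Algebra.adjoin ℚ ({α} : Set K) = ⊤)
    (g : Polynomial ℚ) (hg : g.natDegree = 2) :
    ¬ Irreducible (f.comp g) ↔ ∃ β : K, Polynomial.aeval β g = α := by
  refine ⟨fun hred ↦ ?_, fun ⟨β, hβ⟩ ↦ ?_⟩
  · by_contra! hno
    exact hred (irreducible_comp_of_forall_aeval_ne hmonic hirr hg hroot hno)
  · exact not_irreducible_comp_of_aeval_eq hirr.ne_zero hroot hgen (by omega) hβ

theorem comp_quadratic_not_irreducible_iff_root (f : Polynomial ℚ) (hmonic : f.Monic)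
    (hirr : Irreducible f) (d : ℕ) (hdeg : f.natDegree = d)
    (K : Type*) [Field K] [Algebra ℚ K] (α : K) (hroot : Polynomial.aeval α f = 0)
    (hgen : Algebra.adjoin ℚ ({α} : Set K) = ⊤)
    (g : Polynomial ℚ) (hg : g.natDegree = 2) :
    ¬ Irreducible (f.comp g) ↔ ∃ β : K, Polynomial.aeval β g = α :=
  comp_quadratic_not_irreducible_iff_root_general f hmonic hirr K α hroot hgen g hg
end

section
/- Let f ∈ ℚ[x] be a monic irreducible polynomial, let K be a field extension of ℚ and α ∈ K a root of f with K = ℚ(α), and let g ∈ ℚ[t] have degree 2. If the polynomial g(t) − α (the image of g in K[t] minus the constant α) is irreducible in K[t], then f(g(t)) is irreducible in ℚ[t]. -/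
open Polynomial

theorem aux_comp_irred (F : Type*) [Field F] (f : Polynomial F) (hmonic : f.Monic)
    (hirr : Irreducible f)
    (K : Type*) [Field K] [Algebra F K] (α : K) (hroot : Polynomial.aeval α f = 0)
    (hgen : Algebra.adjoin F ({α} : Set K) = ⊤)
    (g : Polynomial F) (hg : g.natDegree = 2)
    (h : Irreducible (g.map (algebraMap F K) - C α)) :
    Irreducible (f.comp g) := by
  have hαint : IsIntegral F α := ⟨f, hmonic, hroot⟩
  have hfmin : f = minpoly F α := minpoly.eq_of_irreducible_of_monic hirr hroot hmonic
  have hKadj : IntermediateField.adjoin F ({α} : Set K) = ⊤ := by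
    apply IntermediateField.toSubalgebra_injective
    rw [IntermediateField.top_toSubalgebra]
    exact top_unique (hgen ▸ Algebra.adjoin_le (IntermediateField.subset_adjoin F {α}))
  have hKfd : FiniteDimensional F K := by
    have h1 : FiniteDimensional F (IntermediateField.adjoin F ({α} : Set K)) :=
      IntermediateField.adjoin.finiteDimensional hαint
    exact ((IntermediateField.equivOfEq hKadj).trans
      IntermediateField.topEquiv).toLinearEquiv.finiteDimensional
  have hfrK : Module.finrank F K = f.natDegree := by
    have h2 := IntermediateField.adjoin.finrank hαint
    rw [← hfmin] at h2
    rw [← h2]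
    exact (((IntermediateField.equivOfEq hKadj).trans
      IntermediateField.topEquiv).toLinearEquiv.finrank_eq).symm
  set p : Polynomial K := g.map (algebraMap F K) - C α with hp
  have hpdeg : p.natDegree = 2 := by
    rw [hp, natDegree_sub_C, natDegree_map]
    exact hg
  have hp0 : p ≠ 0 := fun h0 => by simp [h0] at hpdeg
  haveI : Fact (Irreducible p) := ⟨h⟩
  set L := AdjoinRoot p with hL
  haveI : FiniteDimensional K L := (AdjoinRoot.powerBasis hp0).finite
  have hfrL : Module.finrank K L = 2 := by
    rw [(AdjoinRoot.powerBasis hp0).finrank, AdjoinRoot.powerBasis_dim, hpdeg]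
  haveI : FiniteDimensional F L := Module.Finite.trans K L
  set β : L := AdjoinRoot.root p with hβ
  have hβg : aeval β g = algebraMap K L α := by
    have h3 : aeval β (g.map (algebraMap F K) - C α) = 0 := by
      rw [AdjoinRoot.aeval_eq, ← hp, AdjoinRoot.mk_self]
    rw [map_sub, aeval_C] at h3
    rw [← aeval_map_algebraMap K β g]
    linear_combination h3
  have hβroot : aeval β (f.comp g) = 0 := by
    rw [aeval_comp, hβg, aeval_algebraMap_apply, hroot, map_zero]
  have hβint : IsIntegral F β := IsIntegral.of_finite F β
  -- adjoin F {β} = ⊤ in L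
  have hE : IntermediateField.adjoin F ({β} : Set L) = ⊤ := by
    rw [eq_top_iff]
    rintro x -
    set E := IntermediateField.adjoin F ({β} : Set L) with hEdef
    have hβE : β ∈ E := IntermediateField.subset_adjoin F {β} rfl
    have haevalE : ∀ q : Polynomial F, aeval β q ∈ E := by
      intro q
      have : aeval β q ∈ Algebra.adjoin F ({β} : Set L) := by
        rw [Algebra.adjoin_singleton_eq_range_aeval]
        exact ⟨q, rfl⟩
      exact (IntermediateField.algebra_adjoin_le_adjoin F {β}) this
    have hK2E : ∀ k : K, algebraMap K L k ∈ E := by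
      intro k
      have hk : k ∈ Algebra.adjoin F ({α} : Set K) := hgen ▸ Algebra.mem_top
      induction hk using Algebra.adjoin_induction with
      | mem y hy =>
        rw [Set.mem_singleton_iff] at hy
        rw [hy, ← hβg]
        exact haevalE g
      | algebraMap r =>
        rw [← IsScalarTower.algebraMap_apply]
        exact E.algebraMap_mem r
      | add a b _ _ ha hb => rw [map_add]; exact E.add_mem ha hb
      | mul a b _ _ ha hb => rw [map_mul]; exact E.mul_mem ha hb
    have hx : x ∈ Algebra.adjoin K ({β} : Set L) := by
      rw [AdjoinRoot.adjoinRoot_eq_top]; exact Algebra.mem_top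
    induction hx using Algebra.adjoin_induction with
    | mem y hy => rw [Set.mem_singleton_iff] at hy; rw [hy]; exact hβE
    | algebraMap r => exact hK2E r
    | add a b _ _ ha hb => exact E.add_mem ha hb
    | mul a b _ _ ha hb => exact E.mul_mem ha hb
  have hminβ : (minpoly F β).natDegree = f.natDegree * 2 := by
    have h4 := IntermediateField.adjoin.finrank hβint
    have h5 : Module.finrank F (IntermediateField.adjoin F ({β} : Set L)) =
        Module.finrank F L :=
      ((IntermediateField.equivOfEq hE).trans IntermediateField.topEquiv).toLinearEquiv.finrank_eq
    rw [h4] at h5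
    rw [h5, ← Module.finrank_mul_finrank F K L, hfrK, hfrL]
  have hdvd : minpoly F β ∣ f.comp g := minpoly.dvd F β hβroot
  have hg0 : g ≠ 0 := fun h0 => by simp [h0] at hg
  have hcomp0 : f.comp g ≠ 0 := fun h0 => by
    have := natDegree_comp (p := f) (q := g)
    rw [h0, natDegree_zero, hg] at this
    have hfd : f.natDegree ≠ 0 := by
      rw [hfmin]
      exact (minpoly.natDegree_pos hαint).ne'
    omega
  have hdegcomp : (f.comp g).natDegree = f.natDegree * 2 := by
    rw [natDegree_comp, hg]
  obtain ⟨c, hc⟩ := hdvd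
  have hmin0 : minpoly F β ≠ 0 := minpoly.ne_zero hβint
  have hc0 : c ≠ 0 := fun h0 => by rw [h0, mul_zero] at hc; exact hcomp0 hc
  have hcdeg : c.natDegree = 0 := by
    have := natDegree_mul hmin0 hc0
    rw [← hc, hdegcomp, hminβ] at this
    omega
  have hcunit : IsUnit c := by
    rw [Polynomial.eq_C_of_natDegree_eq_zero hcdeg] at hc0 ⊢
    exact Polynomial.isUnit_C.mpr (isUnit_iff_ne_zero.mpr (fun h0 => hc0 (by rw [h0, map_zero])))
  have hassoc : Associated (minpoly F β) (f.comp g) := ⟨hcunit.unit, by rw [hcunit.unit_spec]; exact hc.symm⟩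
  exact hassoc.irreducible (minpoly.irreducible hβint)

theorem comp_irreducible_of_shifted_irreducible (f : Polynomial ℚ) (hmonic : f.Monic)
    (hirr : Irreducible f)
    (K : Type*) [Field K] [Algebra ℚ K] (α : K) (hroot : Polynomial.aeval α f = 0)
    (hgen : Algebra.adjoin ℚ ({α} : Set K) = ⊤)
    (g : Polynomial ℚ) (hg : g.natDegree = 2)
    (h : Irreducible (g.map (algebraMap ℚ K) - C α)) :
    Irreducible (f.comp g) :=
  aux_comp_irred ℚ f hmonic hirr K α hroot hgen g hg h
end

section
/- Let f ∈ ℚ[x] be a monic irreducible polynomial, let K be a field extension of ℚ and α ∈ K a root of f with K = ℚ(α), and let g ∈ ℚ[t] have degree 2. If the polynomial g(t) − α (the image of g in K[t] minus the constant α) is not irreducible in K[t], then f(g(t)) is not irreducible in ℚ[t]. -/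
open Polynomial

theorem comp_not_irreducible_of_shifted_not_irreducible (f : Polynomial ℚ) (hmonic : f.Monic)
    (hirr : Irreducible f)
    (K : Type*) [Field K] [Algebra ℚ K] (α : K) (hroot : Polynomial.aeval α f = 0)
    (hgen : Algebra.adjoin ℚ ({α} : Set K) = ⊤)
    (g : Polynomial ℚ) (hg : g.natDegree = 2)
    (h : ¬ Irreducible (g.map (algebraMap ℚ K) - C α)) :
    ¬ Irreducible (f.comp g) := by
  intro hcirr
  set p : K[X] := g.map (algebraMap ℚ K) - C α with hp
  have hpdeg : p.natDegree = 2 := by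
    rw [hp, natDegree_sub_C, natDegree_map, hg]
  -- since p is reducible of degree 2, it has a root β
  have hroots : p.roots ≠ 0 := by
    intro h0
    exact h ((irreducible_iff_roots_eq_zero_of_degree_le_three (by omega) (by omega)).mpr h0)
  obtain ⟨β, hβ⟩ := Multiset.exists_mem_of_ne_zero hroots
  have hp0 : p ≠ 0 := fun h0 => by simp [h0] at hpdeg
  have hβroot : p.IsRoot β := (mem_roots hp0).mp hβ
  have hgβ : aeval β g = α := by
    have := hβroot
    simp only [hp, IsRoot.def, eval_sub, eval_C, eval_map, sub_eq_zero] at this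
    rwa [aeval_def]
  -- α is integral over ℚ
  have hint : IsIntegral ℚ α := ⟨f, hmonic, by rwa [← aeval_def]⟩
  have hfmin : minpoly ℚ α = f := (minpoly.eq_of_irreducible_of_monic hirr hroot hmonic).symm
  -- power basis for K
  let pb : PowerBasis ℚ K :=
    (Algebra.adjoin.powerBasis hint).map <|
      (Subalgebra.equivOfEq _ ⊤ hgen).trans Subalgebra.topEquiv
  have hfin : FiniteDimensional ℚ K := pb.finite
  have hfrank : Module.finrank ℚ K = f.natDegree := by
    rw [pb.finrank]
    show (minpoly ℚ α).natDegree = f.natDegree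
    rw [hfmin]
  -- β is a root of f.comp g
  have hβint : IsIntegral ℚ β := IsIntegral.of_finite ℚ β
  have hdvd : minpoly ℚ β ∣ f.comp g := minpoly.dvd ℚ β (by rw [aeval_comp, hgβ, hroot])
  have hassoc : Associated (minpoly ℚ β) (f.comp g) :=
    (minpoly.irreducible hβint).associated_of_dvd hcirr hdvd
  have hdeg : (f.comp g).natDegree = (minpoly ℚ β).natDegree :=
    natDegree_eq_of_degree_eq (degree_eq_degree_of_associated hassoc.symm)
  have hle : (minpoly ℚ β).natDegree ≤ f.natDegree := hfrank ▸ minpoly.natDegree_le β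
  have hpos : 0 < f.natDegree := hirr.natDegree_pos
  rw [natDegree_comp, hg] at hdeg
  omega
end

section
/- Let f(x) = x⁴ + a·x³ + b·x² + c·x + d be a monic quartic polynomial with rational coefficients a, b, c, d. If 8c − 4ab + a³ ≠ 0, then f is not 2-superirreducible over ℚ. -/
open Polynomial

theorem quartic_not_superirreducible (a b c d : ℚ) (h : 8 * c - 4 * a * b + a ^ 3 ≠ 0) :
    ¬ IsSuperirreducible ℚ 2 (X ^ 4 + C a * X ^ 3 + C b * X ^ 2 + C c * X + C d) := by
  set L : ℚ := (8 * c - 4 * a * b + a ^ 3) / 8 with hLdef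
  have hL : L ≠ 0 := by
    rw [hLdef]; intro hc; apply h; field_simp at hc; linarith
  set e : ℚ := (b - a ^ 2 / 4) / 2 with hedef
  set M : ℚ := d - e ^ 2 with hMdef
  set g : ℚ[X] := C (-1 / L) * X ^ 2 + C (0 : ℚ) * X + C (-M / L) with hgdef
  set Q : ℚ[X] := X ^ 2 + C (a / 2) * X + C e with hQdef
  set f : ℚ[X] := X ^ 4 + C a * X ^ 3 + C b * X ^ 2 + C c * X + C d with hfdef
  have hgdeg : g.natDegree = 2 := by
    rw [hgdef]; exact natDegree_quadratic (by simp [hL])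
  have hQg : (Q.comp g).natDegree = 4 := by
    rw [natDegree_comp, hgdeg, hQdef]
    rw [show (X ^ 2 + C (a / 2) * X + C e : ℚ[X]) = C 1 * X ^ 2 + C (a / 2) * X + C e by simp]
    rw [natDegree_quadratic one_ne_zero]
  have hXlt : (X : ℚ[X]).natDegree < (Q.comp g).natDegree := by
    rw [hQg, natDegree_X]; norm_num
  have key : f.comp g = (Q.comp g - X) * (Q.comp g + X) := by
    apply Polynomial.funext
    intro r
    simp only [hfdef, hQdef, eval_comp, eval_mul, eval_sub, eval_add, eval_pow, eval_C, eval_X]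
    set y := eval r g with hy
    have hgy : L * y + M = -r ^ 2 := by
      rw [hy, hgdef]
      simp only [eval_add, eval_mul, eval_pow, eval_C, eval_X]
      field_simp
      ring
    have hsq : y ^ 4 + a * y ^ 3 + b * y ^ 2 + c * y + d
        = (y ^ 2 + a / 2 * y + e) ^ 2 + (L * y + M) := by
      rw [hMdef, hedef, hLdef]
      field_simp
      ring
    linear_combination hsq + hgy
  rintro ⟨-, hirr⟩
  have hi : Irreducible (f.comp g) := hirr g (by omega) (by omega)
  rcases hi.isUnit_or_isUnit key with hu | hu
  · have := natDegree_eq_zero_of_isUnit hu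
    rw [natDegree_sub_eq_left_of_natDegree_lt hXlt, hQg] at this
    exact absurd this (by norm_num)
  · have := natDegree_eq_zero_of_isUnit hu
    rw [natDegree_add_eq_left_of_natDegree_lt hXlt, hQg] at this
    exact absurd this (by norm_num)
end

section
/- The equation X⁴ + 2Y⁴ = Z² has no nontrivial rational solutions: if x, y, z ∈ ℚ satisfy x⁴ + 2y⁴ = z², then y = 0. -/
/-!
Descent along the 2-isogeny between `X⁴ + 2Y⁴ = Z²` and `D⁴ - 8E⁴ = X²`. For a primitive
solution with `Y ≠ 0`, `X` and `Z` are odd and `(Z - X²)/2 · (Z + X²)/2 = 8(Y/2)⁴` with coprime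
positive factors of odd sum, so one factor is `8E⁴` and the other `D⁴`; the choice `Z - X² = 16E⁴`
is forced modulo 4 and gives `D⁴ - 8E⁴ = X²`. Factoring `(D² - X)/2 · (D² + X)/2 = 2E⁴` in the same
way gives `R⁴ + 2S⁴ = D²` with `S ≠ 0` and `0 < |D| ≤ D⁴ < Z`, so there is no least solution.
-/

lemma pos_and_pos_of_mul_pos_of_add_pos {α : Type*} [Ring α] [LinearOrder α]
    [IsStrictOrderedRing α] {u v : α} (hmul : 0 < u * v) (hadd : 0 < u + v) : 0 < u ∧ 0 < v :=
  (pos_and_pos_or_neg_and_neg_of_mul_pos hmul).resolve_right fun ⟨hu, hv⟩ ↦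
    (add_neg hu hv).not_gt hadd

namespace Int

lemma exists_eq_pow_of_mul_eq_pow_of_nonneg {u v w : ℤ} {k : ℕ} (huv : IsCoprime u v)
    (hu : 0 ≤ u) (h : u * v = w ^ k) : ∃ r, u = r ^ k := by
  obtain ⟨d, hd⟩ := exists_associated_pow_of_mul_eq_pow' huv h
  refine ⟨d.natAbs, ?_⟩
  rw [← natAbs_of_nonneg hu, ← associated_iff_natAbs.mp hd, natAbs_pow]
  push_cast
  rfl

lemma exists_eq_mul_pow_four_and_eq_pow_four {m u v w : ℤ} (hm : 0 < m) (huv : IsCoprime u v)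
    (hmv : IsCoprime m v) (hu : 0 < u) (hv : 0 < v) (h : u * v = m * w ^ 4) :
    ∃ r s, u = m * r ^ 4 ∧ v = s ^ 4 := by
  obtain ⟨u', rfl⟩ := hmv.dvd_of_dvd_mul_right ⟨w ^ 4, by rw [h]⟩
  have h' : u' * v = w ^ 4 := mul_left_cancel₀ hm.ne' (by rw [← h, mul_assoc])
  have huv' : IsCoprime u' v := huv.of_mul_left_right
  obtain ⟨r, rfl⟩ :=
    exists_eq_pow_of_mul_eq_pow_of_nonneg huv' (pos_of_mul_pos_right hu hm.le).le h'
  obtain ⟨s, rfl⟩ := exists_eq_pow_of_mul_eq_pow_of_nonneg huv'.symm hv.le (by rw [mul_comm, h'])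
  exact ⟨r, s, rfl, rfl⟩

lemma exists_pow_four_of_mul_eq_two_pow_mul_pow_four {k : ℕ} {u v w : ℤ} (huv : IsCoprime u v)
    (hu : 0 < u) (hv : 0 < v) (hodd : Odd (u + v)) (h : u * v = 2 ^ k * w ^ 4) :
    ∃ r s, u = 2 ^ k * r ^ 4 ∧ v = s ^ 4 ∨ u = r ^ 4 ∧ v = 2 ^ k * s ^ 4 := by
  rcases even_or_odd v with hv₂ | hv₂
  · have hu₂ : Odd u := by rwa [odd_add, iff_true_intro hv₂, iff_true] at hodd
    obtain ⟨s, r, hv', hu'⟩ := exists_eq_mul_pow_four_and_eq_pow_four (by positivity) huv.symm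
      (isCoprime_two_left.mpr hu₂).pow_left hv hu (by rw [mul_comm, h])
    exact ⟨r, s, .inr ⟨hu', hv'⟩⟩
  · obtain ⟨r, s, hu', hv'⟩ := exists_eq_mul_pow_four_and_eq_pow_four (by positivity) huv
      (isCoprime_two_left.mpr hv₂).pow_left hu hv h
    exact ⟨r, s, .inl ⟨hu', hv'⟩⟩

lemma sq_add_sq_ne_four_mul {a b : ℤ} (ha : Odd a) (c : ℤ) : a ^ 2 + b ^ 2 ≠ 4 * c := by
  intro h
  have hb : Odd b := by
    rw [← odd_pow' two_ne_zero, show b ^ 2 = 4 * c - a ^ 2 by linarith]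
    exact Even.sub_odd ⟨2 * c, by ring⟩ ha.pow
  have ha₄ := sq_mod_four_eq_one_of_odd ha
  have hb₄ := sq_mod_four_eq_one_of_odd hb
  omega

lemma odd_of_pow_four_add_two_mul_pow_four_eq_sq {a b c : ℤ} (hab : IsCoprime a b)
    (h : a ^ 4 + 2 * b ^ 4 = c ^ 2) : Odd a := by
  by_contra ha
  obtain ⟨α, rfl⟩ := not_odd_iff_even.mp ha
  obtain ⟨γ, rfl⟩ : Even c :=
    (even_pow' two_ne_zero).mp ⟨8 * α ^ 4 + b ^ 4, by linear_combination -h⟩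
  have h' : 2 * b ^ 4 = 4 * γ ^ 2 - 16 * α ^ 4 := by linear_combination h
  have hb : Even b := (even_pow' four_ne_zero).mp (even_iff.mpr (by omega))
  have h₂ : IsUnit (2 : ℤ) := hab.isUnit_of_dvd' ⟨α, by ring⟩ (even_iff_two_dvd.mp hb)
  norm_num [isUnit_iff] at h₂

lemma exists_pow_four_eq_sq_add_eight_mul_pow_four {a b c : ℤ} (hab : IsCoprime a b)
    (hb : b ≠ 0) (hc : 0 < c) (h : a ^ 4 + 2 * b ^ 4 = c ^ 2) :
    ∃ d e, d ^ 4 = a ^ 2 + 8 * e ^ 4 ∧ e ≠ 0 ∧ IsCoprime a d ∧ d ^ 4 < c := by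
  have ha := odd_of_pow_four_add_two_mul_pow_four_eq_sq hab h
  have hc₂ : Odd c := (odd_pow' two_ne_zero).mp (h ▸ ha.pow.add_even ⟨b ^ 4, two_mul _⟩)
  obtain ⟨u, hu⟩ := hc₂.sub_odd (ha.pow (n := 2))
  obtain ⟨v, hv⟩ := hc₂.add_odd (ha.pow (n := 2))
  have ha₂ : a ^ 2 = v - u := by omega
  have hb₄ : b ^ 4 = 2 * (u * v) := by
    linarith [show 2 * b ^ 4 = 4 * (u * v) by
      linear_combination h + (c + a ^ 2) * hu + (u + u) * hv]
  obtain ⟨β, rfl⟩ : Even b := (even_pow' four_ne_zero).mp ⟨u * v, by rw [hb₄]; ring⟩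
  have huv : u * v = 2 ^ 3 * β ^ 4 := by linarith
  have hcop : IsCoprime u v := by
    obtain ⟨x, y, hxy⟩ := hab.pow (m := 2) (n := 4)
    exact ⟨-x + 2 * y * v, x, by linear_combination hxy - x * ha₂ - y * hb₄⟩
  have hβ₀ : β ≠ 0 := by rintro rfl; simp at hb
  obtain ⟨hu₀, hv₀⟩ :=
    pos_and_pos_of_mul_pos_of_add_pos (by rw [huv]; positivity) (by omega : 0 < u + v)
  obtain ⟨e, d, ⟨rfl, rfl⟩ | ⟨rfl, rfl⟩⟩ :=
    exists_pow_four_of_mul_eq_two_pow_mul_pow_four hcop hu₀ hv₀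
      (by rwa [show u + v = c by omega]) huv
  · refine ⟨d, e, by linear_combination -ha₂, by rintro rfl; simp at hu₀, ?_, by omega⟩
    have : IsCoprime (a ^ 2) (d ^ 4) := by
      simpa [ha₂, neg_add_eq_sub] using hcop.neg_left.add_mul_left_left 1
    exact (IsCoprime.pow_iff two_pos four_pos).mp this
  · exact absurd (by linear_combination ha₂) (sq_add_sq_ne_four_mul (b := e ^ 2) ha (2 * d ^ 4))

lemma exists_pow_four_add_two_mul_pow_four_eq_sq {a d e : ℤ} (ha : Odd a) (had : IsCoprime a d)
    (he : e ≠ 0) (h : d ^ 4 = a ^ 2 + 8 * e ^ 4) : ∃ r s, r ^ 4 + 2 * s ^ 4 = d ^ 2 ∧ s ≠ 0 := by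
  have hd : Odd (d ^ 2) := (odd_pow' two_ne_zero).mp <| by
    rw [← pow_mul, h]
    exact ha.pow.add_even ⟨4 * e ^ 4, by ring⟩
  obtain ⟨p, hp⟩ := hd.sub_odd ha
  obtain ⟨q, hq⟩ := hd.add_odd ha
  have hpq : p * q = 2 ^ 1 * e ^ 4 := by
    linarith [show 4 * (p * q) = 8 * e ^ 4 by
      linear_combination -(d ^ 2 + a) * hp - (p + p) * hq + h]
  have hdiff : q - p = a := by omega
  have hsum : p + q = d ^ 2 := by omega
  have hcop : IsCoprime p q := by
    obtain ⟨x, y, hxy⟩ := had.pow_right (n := 2)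
    exact ⟨y - x, x + y, by linear_combination hxy + x * hdiff + y * hsum⟩
  have hd₀ : d ≠ 0 := by rintro rfl; simp at hd
  obtain ⟨hp₀, hq₀⟩ :=
    pos_and_pos_of_mul_pos_of_add_pos (by rw [hpq]; positivity) (by rw [hsum]; positivity)
  obtain ⟨s, r, ⟨rfl, rfl⟩ | ⟨rfl, rfl⟩⟩ :=
    exists_pow_four_of_mul_eq_two_pow_mul_pow_four hcop hp₀ hq₀ (hsum ▸ hd) hpq
  · exact ⟨r, s, by linear_combination hsum, by rintro rfl; simp at hp₀⟩
  · exact ⟨s, r, by linear_combination hsum, by rintro rfl; simp at hq₀⟩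

lemma exists_lt_of_isCoprime_of_pow_four_add_two_mul_pow_four_eq_sq {a b c : ℤ}
    (hab : IsCoprime a b) (hb : b ≠ 0) (hc : 0 < c) (h : a ^ 4 + 2 * b ^ 4 = c ^ 2) :
    ∃ a' b' c', a' ^ 4 + 2 * b' ^ 4 = c' ^ 2 ∧ b' ≠ 0 ∧ 0 < c' ∧ c' < c := by
  obtain ⟨d, e, hde, he, had, hdc⟩ := exists_pow_four_eq_sq_add_eight_mul_pow_four hab hb hc h
  obtain ⟨r, s, hrs, hs⟩ := exists_pow_four_add_two_mul_pow_four_eq_sq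
    (odd_of_pow_four_add_two_mul_pow_four_eq_sq hab h) had he hde
  have hd : d ≠ 0 := (pow_ne_zero_iff four_ne_zero).mp (by rw [hde]; positivity)
  refine ⟨r, s, |d|, by rwa [sq_abs], hs, abs_pos.mpr hd, ?_⟩
  calc |d| ≤ |d| ^ 4 := le_self_pow₀ (one_le_abs hd) four_ne_zero
    _ = d ^ 4 := Even.pow_abs ⟨2, rfl⟩ d
    _ < c := hdc

lemma exists_isCoprime_of_pow_four_add_two_mul_pow_four_eq_sq {a b c : ℤ} (hb : b ≠ 0)
    (hc : 0 < c) (h : a ^ 4 + 2 * b ^ 4 = c ^ 2) :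
    ∃ a' b' c', a' ^ 4 + 2 * b' ^ 4 = c' ^ 2 ∧ IsCoprime a' b' ∧ b' ≠ 0 ∧ 0 < c' ∧ c' ≤ c := by
  obtain ⟨g, a', b', hg, hab', rfl, rfl⟩ := exists_gcd_one' (gcd_pos_of_ne_zero_right a hb)
  have hg₀ : (0 : ℤ) < g := by exact_mod_cast hg
  obtain ⟨c', rfl⟩ : (g : ℤ) ^ 2 ∣ c :=
    (Int.pow_dvd_pow_iff two_ne_zero).mp ⟨a' ^ 4 + 2 * b' ^ 4, by rw [← h]; ring⟩
  have hc' : 0 < c' := pos_of_mul_pos_right hc (by positivity)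
  refine ⟨a', b', c', mul_left_cancel₀ (pow_ne_zero 4 hg₀.ne') (by linear_combination h),
    isCoprime_iff_gcd_eq_one.mpr hab', left_ne_zero_of_mul hb, hc', ?_⟩
  exact le_mul_of_one_le_left hc'.le (one_le_pow₀ (by omega))

theorem eq_zero_of_pow_four_add_two_mul_pow_four_eq_sq {a b c : ℤ}
    (h : a ^ 4 + 2 * b ^ 4 = c ^ 2) : b = 0 := by
  induction hn : c.natAbs using Nat.strong_induction_on generalizing a b c with
  | _ n ih =>
  by_contra hb
  have hc : 0 < |c| := abs_pos.mpr ((pow_ne_zero_iff two_ne_zero).mp (by rw [← h]; positivity))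
  obtain ⟨a₁, b₁, c₁, h₁, hab₁, hb₁, hc₁, hc₁c⟩ :=
    exists_isCoprime_of_pow_four_add_two_mul_pow_four_eq_sq hb hc (by rwa [sq_abs])
  obtain ⟨a₂, b₂, c₂, h₂, hb₂, hc₂, hc₂c₁⟩ :=
    exists_lt_of_isCoprime_of_pow_four_add_two_mul_pow_four_eq_sq hab₁ hb₁ hc₁ h₁
  rw [abs_eq_natAbs] at hc₁c
  exact hb₂ (ih c₂.natAbs (by omega) h₂ rfl)

end Int

theorem no_nontrivial_rational_x4_add_two_y4_eq_z2 (x y z : ℚ)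
    (h : x ^ 4 + 2 * y ^ 4 = z ^ 2) : y = 0 := by
  have key : (x.num * y.den * z.den) ^ 4 + 2 * (y.num * x.den * z.den) ^ 4 =
      (z.num * (x.den * y.den) ^ 2 * z.den) ^ 2 := by
    qify
    rw [← x.mul_den_eq_num, ← y.mul_den_eq_num, ← z.mul_den_eq_num]
    linear_combination ((x.den : ℚ) * y.den * z.den) ^ 4 * h
  simpa using Int.eq_zero_of_pow_four_add_two_mul_pow_four_eq_sq key
end

section
/- The polynomial x⁴ + 1 ∈ ℚ[x] is 2-superirreducible over ℚ: it is irreducible in ℚ[x], and for every nonconstant polynomial g ∈ ℚ[x] of degree at most 2, the composition (x⁴+1)∘g is irreducible in ℚ[x]. -/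
/-!
Let `P` be an irreducible factor of `f ∘ g` and `α` a root of `P`. Then `β = g(α)` is a root of `f`,
so `deg P = [K(α) : K] ≥ [K(β) : K] = deg f`, and in case of equality `K(α) = K(β)`: then
`α = p(β)` for a polynomial `p`, and `g(p(β)) = β` means `f ∣ g ∘ p - X`.

For `f = X⁴ + 1` and `deg g ≤ 2`, a proper factor of `f ∘ g` would contain such a `P` of degree
exactly `4`, and `deg g = 2`. Completing the square in `g(p(ζ)) = ζ` makes `b² - 4ac + 4aζ` a square
in `ℚ(ζ)`, `ζ⁴ = -1`. But `r + sζ` with `s ≠ 0` is never a square there: its norm `r⁴ + s⁴` would be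
a rational square, forcing `r = 0` by Fermat's theorem on `x⁴ + y⁴ = z²`, and then `√2` would be
rational.
-/

open Polynomial

section Composition

variable {K : Type*} [Field K] {f g P : K[X]}

theorem aeval_aeval_root_eq_zero_of_dvd_comp (hPf : P ∣ f.comp g) :
    aeval (aeval (AdjoinRoot.root P) g) f = 0 := by
  rw [← aeval_comp, AdjoinRoot.aeval_eq, AdjoinRoot.mk_eq_zero]
  exact hPf

theorem natDegree_minpoly_aeval_root_of_dvd_comp (hf : Irreducible f) (hP : Irreducible P)
    (hPf : P ∣ f.comp g) :
    (minpoly K (aeval (AdjoinRoot.root P) g)).natDegree = f.natDegree := by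
  have := Fact.mk hP
  rw [← minpoly.eq_of_irreducible hf (aeval_aeval_root_eq_zero_of_dvd_comp hPf),
    natDegree_mul_leadingCoeff_inv _ hf.ne_zero]

theorem natDegree_le_of_irreducible_dvd_comp (hf : Irreducible f) (hP : Irreducible P)
    (hPf : P ∣ f.comp g) : f.natDegree ≤ P.natDegree := by
  have := (AdjoinRoot.powerBasis hP.ne_zero).finite
  calc f.natDegree = (minpoly K (aeval (AdjoinRoot.root P) g)).natDegree :=
        (natDegree_minpoly_aeval_root_of_dvd_comp hf hP hPf).symm
    _ ≤ Module.finrank K (AdjoinRoot P) := minpoly.natDegree_le _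
    _ = P.natDegree := (AdjoinRoot.powerBasis hP.ne_zero).finrank

theorem exists_dvd_comp_sub_X_of_irreducible_dvd_comp (hf : Irreducible f) (hP : Irreducible P)
    (hPf : P ∣ f.comp g) (hdeg : P.natDegree ≤ f.natDegree) :
    ∃ p : K[X], f ∣ g.comp p - X := by
  have := Fact.mk hP
  have := (AdjoinRoot.powerBasis hP.ne_zero).finite
  set β := aeval (AdjoinRoot.root P) g
  have hβ : aeval β f = 0 := aeval_aeval_root_eq_zero_of_dvd_comp hPf
  have hβ_gen : Algebra.adjoin K {β} = ⊤ := by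
    rw [← IntermediateField.adjoin_simple_eq_top_iff_of_isAlgebraic
        (Algebra.IsAlgebraic.isAlgebraic β), Field.primitive_element_iff_minpoly_natDegree_eq,
      natDegree_minpoly_aeval_root_of_dvd_comp hf hP hPf,
      (AdjoinRoot.powerBasis hP.ne_zero).finrank]
    exact le_antisymm (natDegree_le_of_irreducible_dvd_comp hf hP hPf) hdeg
  obtain ⟨p, hp⟩ : ∃ p : K[X], aeval β p = AdjoinRoot.root P := by
    rw [← AlgHom.mem_range, ← Algebra.adjoin_singleton_eq_range_aeval K β, hβ_gen]
    trivial
  refine ⟨p, (dvd_mul_right f (C f.leadingCoeff⁻¹)).trans ?_⟩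
  rw [minpoly.eq_of_irreducible hf hβ]
  apply minpoly.dvd
  rw [map_sub, aeval_comp, hp, aeval_X, sub_self]

end Composition

theorem exists_eq_cubic_add_mul {R : Type*} [CommRing R] {m : R[X]} (hm : m.Monic)
    (hdeg : m.natDegree = 4) (p : R[X]) :
    ∃ (x₀ x₁ x₂ x₃ : R) (q : R[X]),
      p = C x₀ + C x₁ * X + C x₂ * X ^ 2 + C x₃ * X ^ 3 + m * q := by
  have hlt : (p %ₘ m).natDegree < 4 :=
    hdeg ▸ natDegree_modByMonic_lt p hm (fun h => by simp [h] at hdeg)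
  refine ⟨(p %ₘ m).coeff 0, (p %ₘ m).coeff 1, (p %ₘ m).coeff 2, (p %ₘ m).coeff 3, p /ₘ m, ?_⟩
  conv_lhs => rw [← modByMonic_add_div p m, as_sum_range_C_mul_X_pow' _ hlt]
  simp only [Finset.sum_range_succ, Finset.sum_range_zero, pow_zero, pow_one, mul_one, zero_add]

theorem eq_zero_of_X_pow_four_add_one_dvd {K : Type*} [Field K] {c₀ c₁ c₂ c₃ : K}
    (h : (X ^ 4 + 1 : K[X]) ∣ C c₀ + C c₁ * X + C c₂ * X ^ 2 + C c₃ * X ^ 3) :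
    c₀ = 0 ∧ c₁ = 0 ∧ c₂ = 0 ∧ c₃ = 0 := by
  have hdeg : (X ^ 4 + 1 : K[X]).degree = 4 := by compute_degree!
  have h0 := eq_zero_of_dvd_of_degree_lt h (by rw [hdeg]; compute_degree!)
  refine ⟨?_, ?_, ?_, ?_⟩
  · simpa using congrArg (coeff · 0) h0
  · simpa using congrArg (coeff · 1) h0
  · simpa using congrArg (coeff · 2) h0
  · simpa using congrArg (coeff · 3) h0

theorem Rat.not_fermat_42 {a b c : ℚ} (ha : a ≠ 0) (hb : b ≠ 0) : a ^ 4 + b ^ 4 ≠ c ^ 2 := by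
  intro h
  set m : ℚ := a.den * b.den * c.den
  have hA : ((a.num * (b.den * c.den) : ℤ) : ℚ) = a * m := by
    push_cast; rw [← Rat.mul_den_eq_num]; ring
  have hB : ((b.num * (a.den * c.den) : ℤ) : ℚ) = b * m := by
    push_cast; rw [← Rat.mul_den_eq_num]; ring
  have hC : ((c.num * (a.den ^ 2 * b.den ^ 2 * c.den) : ℤ) : ℚ) = c * m ^ 2 := by
    push_cast; rw [← Rat.mul_den_eq_num]; ring
  have hint : (a.num * (b.den * c.den)) ^ 4 + (b.num * (a.den * c.den)) ^ 4
      = (c.num * (a.den ^ 2 * b.den ^ 2 * c.den)) ^ 2 := by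
    have : ((a.num * (b.den * c.den) : ℤ) : ℚ) ^ 4 + ((b.num * (a.den * c.den) : ℤ) : ℚ) ^ 4
        = ((c.num * (a.den ^ 2 * b.den ^ 2 * c.den) : ℤ) : ℚ) ^ 2 := by
      rw [hA, hB, hC]
      linear_combination m ^ 4 * h
    exact_mod_cast this
  exact _root_.not_fermat_42 (mul_ne_zero (Rat.num_ne_zero.mpr ha) (by simp))
    (mul_ne_zero (Rat.num_ne_zero.mpr hb) (by simp)) hint

theorem mul_eq_mul_of_sq_coords {x₀ x₁ x₂ x₃ : ℚ} (h₂ : 2 * x₀ * x₂ + x₁ ^ 2 - x₃ ^ 2 = 0)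
    (h₃ : x₀ * x₃ + x₁ * x₂ = 0) : x₀ * x₁ = x₂ * x₃ := by
  by_contra hne
  set q := 2 * (x₀ * x₁ - x₂ * x₃)
  have hq : q ≠ 0 := fun h => hne (by linarith)
  set e := x₀ ^ 2 - 2 * x₁ * x₃ - x₂ ^ 2
  set u := x₀ ^ 2 - x₂ ^ 2 + 2 * x₁ * x₃
  set v := 2 * x₀ * x₂ - x₁ ^ 2 + x₃ ^ 2
  -- For `γ = x₀ + x₁ζ + x₂ζ² + x₃ζ³` with `ζ⁴ = -1`, the hypotheses say `γ² = e + qζ`, and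
  -- `u + vi` is the norm of `γ` down to `ℚ(i)`, `i = ζ²`; so `(u + vi)² = e² - q²i`.
  have hre : u ^ 2 - v ^ 2 = e ^ 2 := by
    linear_combination (-(2 * x₀ * x₂ + x₁ ^ 2 - x₃ ^ 2)) * h₂ + (8 * (x₀ * x₁ - x₂ * x₃)) * h₃
  have him : 2 * (u * v) = -q ^ 2 := by
    linear_combination (2 * e) * h₂ + (4 * (x₀ * x₃ + x₁ * x₂)) * h₃
  have he : e = 0 := by
    by_contra he
    exact Rat.not_fermat_42 he hq (c := u ^ 2 + v ^ 2)
      (by linear_combination (v ^ 2 - u ^ 2 - e ^ 2) * hre + (q ^ 2 - 2 * u * v) * him)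
  have hq2 : q ^ 2 = 2 * u ^ 2 := by
    have hprod : (q ^ 2 - 2 * u ^ 2) * (q ^ 2 + 2 * u ^ 2) = 0 := by
      linear_combination (q ^ 2 - 2 * u * v) * him + (-4 * u ^ 2) * hre + (-4 * u ^ 2 * e) * he
    have hpos : q ^ 2 + 2 * u ^ 2 ≠ 0 := by positivity
    exact sub_eq_zero.mp ((mul_eq_zero.mp hprod).resolve_right hpos)
  have hu : u ≠ 0 := fun hu => hq (by simpa [hu] using hq2)
  exact (by norm_num : ¬ IsSquare (2 : ℚ)) ⟨q / u, by field_simp; linear_combination -hq2⟩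

theorem irreducible_X_pow_four_add_one : Irreducible (X ^ 4 + 1 : ℚ[X]) := by
  have h8 : cyclotomic (2 ^ (2 + 1)) ℚ = X ^ 4 + 1 := by
    rw [cyclotomic_prime_pow_eq_geom_sum Nat.prime_two]
    simp only [Finset.sum_range_succ, Finset.sum_range_zero]
    ring
  exact h8 ▸ cyclotomic.irreducible_rat (by norm_num)

theorem X_pow_four_add_one_not_dvd_sq_sub {r s : ℚ} (hs : s ≠ 0) (p : ℚ[X]) :
    ¬ (X ^ 4 + 1 : ℚ[X]) ∣ p ^ 2 - (C s * X + C r) := by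
  intro hdvd
  obtain ⟨x₀, x₁, x₂, x₃, q, rfl⟩ :=
    exists_eq_cubic_add_mul (by simpa using monic_X_pow_add_C (1 : ℚ) four_ne_zero)
      (by compute_degree!) p
  have hrem : (X ^ 4 + 1 : ℚ[X]) ∣ C (x₀ ^ 2 - 2 * x₁ * x₃ - x₂ ^ 2 - r)
      + C (2 * (x₀ * x₁ - x₂ * x₃) - s) * X + C (2 * x₀ * x₂ + x₁ ^ 2 - x₃ ^ 2) * X ^ 2
      + C (2 * (x₀ * x₃ + x₁ * x₂)) * X ^ 3 := by
    convert dvd_sub hdvd (dvd_mul_right _ ((X ^ 4 + 1) * q ^ 2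
      + 2 * q * (C x₀ + C x₁ * X + C x₂ * X ^ 2 + C x₃ * X ^ 3)
      + C (x₂ ^ 2 + 2 * x₁ * x₃) + C (2 * x₂ * x₃) * X + C (x₃ ^ 2) * X ^ 2)) using 1
    simp only [map_add, map_sub, map_mul, map_pow, map_ofNat]
    ring
  obtain ⟨-, h₁, h₂, h₃⟩ := eq_zero_of_X_pow_four_add_one_dvd hrem
  have hx := mul_eq_mul_of_sq_coords h₂ ((mul_eq_zero.mp h₃).resolve_left two_ne_zero)
  exact hs (by linear_combination -h₁ + 2 * hx)

theorem X_pow_four_add_one_not_dvd_comp_sub_X {g : ℚ[X]} (hg : g.natDegree = 2) (p : ℚ[X]) :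
    ¬ (X ^ 4 + 1 : ℚ[X]) ∣ g.comp p - X := by
  intro hdvd
  set a := g.coeff 2
  set b := g.coeff 1
  set c := g.coeff 0
  have ha : a ≠ 0 := by
    simpa [a, ← hg] using g.leadingCoeff_ne_zero.mpr (by rintro rfl; simp at hg)
  have hg_eq : g = C a * X ^ 2 + C b * X + C c := by
    conv_lhs => rw [as_sum_range_C_mul_X_pow' g (by omega : g.natDegree < 3)]
    simp only [Finset.sum_range_succ, Finset.sum_range_zero]
    ring
  -- completing the square: `4a (g ∘ p - X) = (2a p + b)² - (4a X + b² - 4ac)`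
  apply X_pow_four_add_one_not_dvd_sq_sub (mul_ne_zero four_ne_zero ha) (C (2 * a) * p + C b)
    (r := b ^ 2 - 4 * a * c)
  convert dvd_mul_of_dvd_right hdvd (C (4 * a)) using 1
  rw [hg_eq]
  simp only [add_comp, mul_comp, C_comp, X_comp, X_pow_comp, map_sub, map_mul, map_pow, map_ofNat]
  ring

theorem x4_add_one_superirreducible :
    IsSuperirreducible ℚ 2 (X ^ 4 + 1) := by
  have hf := irreducible_X_pow_four_add_one
  have hf₄ : (X ^ 4 + 1 : ℚ[X]).natDegree = 4 := by compute_degree!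
  refine ⟨hf, fun g hg₀ hg₂ => ?_⟩
  have hF : ((X ^ 4 + 1 : ℚ[X]).comp g).natDegree = 4 * g.natDegree := by
    rw [natDegree_comp, hf₄]
  have hF₀ : (X ^ 4 + 1 : ℚ[X]).comp g ≠ 0 := ne_zero_of_natDegree_gt (n := 0) (by omega)
  rw [irreducible_iff_lt_natDegree_lt hF₀ (not_isUnit_of_natDegree_pos _ (by omega))]
  intro q _ hq hqF
  rw [Finset.mem_Ioc, hF] at hq
  obtain ⟨P, hP, hPq⟩ := WfDvdMonoid.exists_irreducible_factor
    (not_isUnit_of_natDegree_pos _ hq.1) (ne_zero_of_natDegree_gt hq.1)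
  have hPF := hPq.trans hqF
  have hPq_deg := natDegree_le_of_dvd hPq (ne_zero_of_natDegree_gt hq.1)
  have hP_deg := hf₄ ▸ natDegree_le_of_irreducible_dvd_comp hf hP hPF
  obtain ⟨p, hp⟩ := exists_dvd_comp_sub_X_of_irreducible_dvd_comp hf hP hPF (by omega)
  exact X_pow_four_add_one_not_dvd_comp_sub_X (by omega) p hp
end

section
/- Let p be a prime number with p ≡ 7 (mod 16) or p ≡ 11 (mod 16). If the polynomial x⁴ + p ∈ ℚ[x] is irreducible over ℚ, then it is 2-superirreducible over ℚ. -/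
/-!
If `f = X⁴ + p` is irreducible and `f(g)` factors for a quadratic `g = aX² + bX + c`, an
irreducible factor of `f(g)` of degree at most `4` has a root `θ` such that `α = g(θ)` is a root
of `f`, and comparing degrees gives `ℚ(θ) = ℚ(α)` (for linear `g` the degree count alone is
contradictory). Completing the square, `(2aθ + b)² = b² - 4ac + 4aα` is a square in `ℚ(α)`;
writing its square root in the basis `1, α, α², α³` and comparing coefficients yields a rational
point `w⁴ + p t⁴ = z²` with `w t ≠ 0`. Clearing denominators, Fermat descent shows there is no
such point when `p ≡ 7, 11 (mod 16)`: in a primitive solution `x` is odd and `y` even (the other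
parities fail modulo `16`), and factoring `z² - x⁴ = p y⁴` over coprime factors gives either a
solution with smaller `z` or a contradiction modulo `4`.
-/

open Polynomial

namespace Nat

theorem pow_four_mod_sixteen (n : ℕ) : n ^ 4 % 16 = n % 2 := by
  rw [Nat.pow_mod, ← Nat.mod_mod_of_dvd n (by norm_num : 2 ∣ 16)]
  have := Nat.mod_lt n (by norm_num : 16 > 0)
  interval_cases n % 16 <;> rfl

theorem sq_mod_sixteen (n : ℕ) :
    n ^ 2 % 16 = 0 ∨ n ^ 2 % 16 = 1 ∨ n ^ 2 % 16 = 4 ∨ n ^ 2 % 16 = 9 := by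
  rw [Nat.pow_mod]
  have := Nat.mod_lt n (by norm_num : 16 > 0)
  interval_cases n % 16 <;> simp

theorem Prime.coprime_or_coprime {p u v : ℕ} (hp : p.Prime) (huv : u.Coprime v) :
    p.Coprime u ∨ p.Coprime v := by
  refine (Nat.coprime_or_dvd_of_prime hp u).imp_right fun hu => ?_
  rw [hp.coprime_iff_not_dvd]
  exact fun hv => hp.one_lt.ne' (Nat.eq_one_of_dvd_coprimes huv hu hv)

theorem Coprime.coprime_self_add_of_two_mul_add {u k : ℕ} (h : (2 * u + k).Coprime k) :
    u.Coprime (u + k) :=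
  Nat.coprime_self_add_right.mpr (Nat.coprime_add_self_left.mp h).coprime_mul_left

theorem Coprime.exists_eq_mul_pow_four {u v c d n : ℕ} (huv : u.Coprime v) (hcv : c.Coprime v)
    (hdu : d.Coprime u) (hcd : c * d ≠ 0) (h : u * v = c * d * n ^ 4) :
    ∃ a b, u = c * a ^ 4 ∧ v = d * b ^ 4 ∧ a * b = n := by
  obtain ⟨u', rfl⟩ := hcv.dvd_of_dvd_mul_right ⟨d * n ^ 4, by rw [h]; ring⟩
  obtain ⟨v', rfl⟩ := hdu.dvd_of_dvd_mul_left ⟨c * n ^ 4, by rw [h]; ring⟩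
  have h' : u' * v' = n ^ 4 :=
    Nat.eq_of_mul_eq_mul_left (Nat.pos_of_ne_zero hcd) (by rw [← h]; ring)
  have hcop : u'.Coprime v' := (huv.coprime_mul_left).coprime_mul_left_right
  obtain ⟨a, rfl⟩ := exists_eq_pow_of_mul_eq_pow (Nat.isUnit_iff.mpr hcop) h'
  obtain ⟨b, rfl⟩ := exists_eq_pow_of_mul_eq_pow (Nat.isUnit_iff.mpr hcop.symm) (by rwa [mul_comm])
  exact ⟨a, b, rfl, rfl, Nat.pow_left_injective four_ne_zero (by simpa [mul_pow] using h')⟩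

theorem exists_add_two_mul_of_sq_eq_sq_add_four_mul {K X M : ℕ} (h : K ^ 2 = X ^ 2 + 4 * M) :
    ∃ u, K = X + 2 * u ∧ u * (u + X) = M := by
  obtain ⟨d, rfl⟩ : ∃ d, K = X + d :=
    Nat.exists_eq_add_of_le ((Nat.pow_le_pow_iff_left two_ne_zero).mp (by omega))
  rcases Nat.even_or_odd d with ⟨u, rfl⟩ | ⟨u, rfl⟩
  · refine ⟨u, by ring, ?_⟩
    nlinarith
  · ring_nf at h
    omega

end Nat

section Descent

variable {p : ℕ}

theorem exists_pow_four_add_mul_pow_four_eq_add (hp : p.Prime) {u v n : ℕ} (huv : u.Coprime v)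
    (h : u * v = p * n ^ 4) (hn : 0 < n) : ∃ a b, 0 < a ∧ 0 < b ∧ a ^ 4 + p * b ^ 4 = u + v := by
  rcases hp.coprime_or_coprime huv with hpu | hpv
  · obtain ⟨a, b, rfl, rfl, rfl⟩ := huv.exists_eq_mul_pow_four (c := 1) (d := p) (n := n)
      (Nat.coprime_one_left _) hpu (by simp [hp.ne_zero]) (by rw [h]; ring)
    exact ⟨a, b, Nat.pos_of_mul_pos_right hn, Nat.pos_of_mul_pos_left hn, by ring⟩
  · obtain ⟨a, b, rfl, rfl, rfl⟩ := huv.exists_eq_mul_pow_four (c := p) (d := 1) (n := n)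
      hpv (Nat.coprime_one_left _) (by simp [hp.ne_zero]) (by rw [h]; ring)
    exact ⟨b, a, Nat.pos_of_mul_pos_left hn, Nat.pos_of_mul_pos_right hn, by ring⟩

theorem Nat.Coprime.coprime_of_pow_four_add_mul_pow_four_eq_sq (hp : Squarefree p) {x y z : ℕ}
    (hxy : x.Coprime y) (h : x ^ 4 + p * y ^ 4 = z ^ 2) : z.Coprime x := by
  have hgx : z.gcd x ∣ x := Nat.gcd_dvd_right z x
  have hg : z.gcd x ^ 2 ∣ p * y ^ 4 :=
    (Nat.dvd_add_right (pow_dvd_pow_of_dvd hgx 2 |>.trans (pow_dvd_pow x (by norm_num)))).mp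
      (h ▸ pow_dvd_pow_of_dvd (Nat.gcd_dvd_left z x) 2)
  have hgp : z.gcd x ^ 2 ∣ p :=
    ((hxy.coprime_dvd_left hgx).pow 2 4).dvd_of_dvd_mul_right hg
  exact Nat.isUnit_iff.mp (hp _ (by rwa [← sq]))

theorem pow_four_add_mul_pow_four_ne_sq_of_odd_of_odd (hmod : p % 16 = 7 ∨ p % 16 = 11)
    {x y z : ℕ} (hx : Odd x) (hy : Odd y) : x ^ 4 + p * y ^ 4 ≠ z ^ 2 := by
  intro h
  have hx4 := Nat.pow_four_mod_sixteen x
  have hy4 : y ^ 4 % 16 = 1 := by rw [Nat.pow_four_mod_sixteen, Nat.odd_iff.mp hy]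
  have hpy := Nat.mul_mod p (y ^ 4) 16
  rw [hy4] at hpy
  have := Nat.sq_mod_sixteen z
  have := Nat.odd_iff.mp hx
  omega

theorem pow_four_add_mul_pow_four_ne_sq_of_even_of_odd (hp4 : p % 4 = 3)
    {x y z : ℕ} (hx : Even x) (hy : Odd y) : x ^ 4 + p * y ^ 4 ≠ z ^ 2 := by
  intro h
  have hx4 := Nat.pow_four_mod_sixteen x
  have hy4 : y ^ 4 % 16 = 1 := by rw [Nat.pow_four_mod_sixteen, Nat.odd_iff.mp hy]
  have hpy := Nat.mul_mod p (y ^ 4) 16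
  rw [hy4] at hpy
  have := Nat.sq_mod_sixteen z
  have := Nat.even_iff.mp hx
  omega

theorem four_mul_pow_four_add_sq_ne_mul_pow_four (hp4 : p % 4 = 3) {a b X : ℕ} (hX : Odd X) :
    4 * a ^ 4 + X ^ 2 ≠ p * b ^ 4 := by
  intro h
  have := Nat.pow_four_mod_sixteen b
  have hpb := Nat.mul_mod p (b ^ 4) 4
  rw [hp4] at hpb
  have := Nat.sq_mod_sixteen X
  have : X ^ 2 % 2 = 1 := Nat.odd_iff.mp hX.pow
  omega

theorem pow_four_add_sq_ne_four_mul_mul_pow_four {a b X : ℕ} (hX : Odd X) :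
    a ^ 4 + X ^ 2 ≠ 4 * p * b ^ 4 := by
  rw [mul_assoc]
  intro h
  have := Nat.pow_four_mod_sixteen a
  have := Nat.sq_mod_sixteen X
  have : X ^ 2 % 2 = 1 := Nat.odd_iff.mp hX.pow
  omega

theorem exists_pow_four_add_mul_pow_four_eq_sq_of_pow_four_eq (hp : p.Prime) {a b X : ℕ}
    (ha : 0 < a) (hbX : b.Coprime X) (h : 4 * p * a ^ 4 + X ^ 2 = b ^ 4) :
    ∃ c d, 0 < c ∧ 0 < d ∧ c ^ 4 + p * d ^ 4 = b ^ 2 := by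
  obtain ⟨u, hb, hu⟩ := Nat.exists_add_two_mul_of_sq_eq_sq_add_four_mul (K := b ^ 2) (X := X)
    (M := p * a ^ 4) (by rw [← pow_mul, ← h]; ring)
  have hcop : u.Coprime (u + X) :=
    Nat.Coprime.coprime_self_add_of_two_mul_add (by rw [add_comm, ← hb]; exact hbX.pow_left 2)
  obtain ⟨c, d, hc, hd, hcd⟩ := exists_pow_four_add_mul_pow_four_eq_add hp hcop hu ha
  exact ⟨c, d, hc, hd, by rw [hcd, hb]; ring⟩

theorem exists_pow_four_add_mul_pow_four_eq_sq_of_four_mul_pow_four_eq (hp : p.Prime)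
    {a b X : ℕ} (ha : 0 < a) (hX : Odd X) (hbX : (2 * b ^ 2).Coprime X)
    (h : p * a ^ 4 + X ^ 2 = 4 * b ^ 4) :
    ∃ c d, 0 < c ∧ 0 < d ∧ c ^ 4 + p * d ^ 4 = (2 * b) ^ 2 := by
  have hXb : X ≤ 2 * b ^ 2 := (Nat.pow_le_pow_iff_left two_ne_zero).mp
    (by ring_nf; omega)
  obtain ⟨u, hu⟩ := Nat.exists_eq_add_of_le hXb
  have hX2 := Nat.odd_iff.mp hX
  have hcop : u.Coprime (u + 2 * X) := by
    rw [Nat.coprime_self_add_right]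
    refine Nat.Coprime.mul_right (Nat.coprime_two_right.mpr ?_) ?_
    · rw [Nat.odd_iff]; omega
    · exact Nat.coprime_add_self_left.mp (by rwa [add_comm, ← hu])
  obtain ⟨c, d, hc, hd, hcd⟩ := exists_pow_four_add_mul_pow_four_eq_add hp hcop
    (by nlinarith) ha
  exact ⟨c, d, hc, hd, by rw [hcd, mul_pow]; omega⟩

theorem exists_lt_of_not_coprime {x y z : ℕ} (hx : 0 < x) (hy : 0 < y) (hxy : ¬x.Coprime y)
    (h : x ^ 4 + p * y ^ 4 = z ^ 2) :
    ∃ x' y' z', 0 < x' ∧ 0 < y' ∧ x' ^ 4 + p * y' ^ 4 = z' ^ 2 ∧ z' < z := by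
  obtain ⟨x', y', -, hx', hy'⟩ := Nat.exists_coprime x y
  set g := x.gcd y
  have hg : 1 < g := by
    have := Nat.gcd_pos_of_pos_left y hx
    unfold Nat.Coprime at hxy
    omega
  have hgz : g ^ 2 ∣ z := by
    rw [← Nat.pow_dvd_pow_iff two_ne_zero, ← h, hx', hy']
    exact ⟨x' ^ 4 + p * y' ^ 4, by ring⟩
  obtain ⟨z', rfl⟩ := hgz
  have h' : x' ^ 4 + p * y' ^ 4 = z' ^ 2 := by
    refine Nat.eq_of_mul_eq_mul_left (pow_pos (zero_lt_one.trans hg) 4) ?_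
    rw [hx', hy'] at h
    linear_combination h
  have hx'0 : 0 < x' := Nat.pos_of_mul_pos_right (hx' ▸ hx)
  have hz' : 0 < z' := Nat.pos_of_ne_zero <| by
    rintro rfl
    simp at h'
    omega
  exact ⟨x', y', z', hx'0, Nat.pos_of_mul_pos_right (hy' ▸ hy), h',
    lt_mul_left hz' (one_lt_pow₀ hg two_ne_zero)⟩

theorem exists_coprime_mul_eq_of_pow_four_add_mul_pow_four_eq (hp : Squarefree p)
    {x w z : ℕ} (hxw : x.Coprime (2 * w)) (h : x ^ 4 + p * (2 * w) ^ 4 = z ^ 2) :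
    ∃ u, z = x ^ 2 + 2 * u ∧ u * (u + x ^ 2) = 4 * p * w ^ 4 ∧ u.Coprime (u + x ^ 2) := by
  obtain ⟨u, hz, huv⟩ := Nat.exists_add_two_mul_of_sq_eq_sq_add_four_mul (K := z) (X := x ^ 2)
    (M := 4 * p * w ^ 4) (by rw [← h]; ring)
  have hzx : z.Coprime x := hxw.coprime_of_pow_four_add_mul_pow_four_eq_sq hp h
  exact ⟨u, hz, huv,
    Nat.Coprime.coprime_self_add_of_two_mul_add (by rw [add_comm, ← hz]; exact hzx.pow_right 2)⟩

theorem exists_lt_of_odd_of_even (hp : p.Prime) (hp4 : p % 4 = 3) {x y z : ℕ} (hy0 : 0 < y)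
    (hxy : x.Coprime y) (hx : Odd x) (hy : Even y) (h : x ^ 4 + p * y ^ 4 = z ^ 2) :
    ∃ x' y' z', 0 < x' ∧ 0 < y' ∧ x' ^ 4 + p * y' ^ 4 = z' ^ 2 ∧ z' < z := by
  obtain ⟨w, rfl⟩ := hy.two_dvd
  have hw : 0 < w := by omega
  obtain ⟨u, hz, huv, hcop⟩ :=
    exists_coprime_mul_eq_of_pow_four_add_mul_pow_four_eq hp.prime.squarefree hxy h
  have hvx : (u + x ^ 2).Coprime (x ^ 2) :=
    Nat.coprime_add_self_left.mpr (Nat.coprime_self_add_right.mp hcop)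
  have hx2 : x ∣ x ^ 2 := dvd_pow_self x two_ne_zero
  have hp0 := hp.pos
  -- `u` and `u + x ^ 2` are coprime with product `4 * p * w ^ 4`: each of `4` and `p` divides
  -- exactly one of them, and the cofactors are fourth powers.
  rcases hp.coprime_or_coprime hcop with hpu | hpv <;>
    rcases Nat.prime_two.coprime_or_coprime hcop with h2u | h2v
  · obtain ⟨a, b, rfl, hv, -⟩ := hcop.exists_eq_mul_pow_four (c := 1) (d := 4 * p) (n := w)
      (Nat.coprime_one_left _) ((by simpa using h2u.pow_left 2 : Nat.Coprime 4 _).mul_left hpu)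
      (by simp [hp.ne_zero]) (huv.trans (by ring))
    exact (pow_four_add_sq_ne_four_mul_mul_pow_four hx (by rwa [one_mul] at hv)).elim
  · obtain ⟨a, b, rfl, hv, -⟩ := hcop.exists_eq_mul_pow_four (c := 4) (d := p) (n := w)
      (by simpa using h2v.pow_left 2) hpu (by simp [hp.ne_zero]) (huv.trans (by ring))
    exact (four_mul_pow_four_add_sq_ne_mul_pow_four hp4 hx hv).elim
  · obtain ⟨a, b, rfl, hv, hab⟩ := hcop.exists_eq_mul_pow_four (c := p) (d := 4) (n := w)
      hpv (by simpa using h2u.pow_left 2) (by simp [hp.ne_zero]) (huv.trans (by ring))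
    have ha : 0 < a := Nat.pos_of_mul_pos_right (hab ▸ hw)
    obtain ⟨c, d, hc, hd, hcd⟩ := exists_pow_four_add_mul_pow_four_eq_sq_of_four_mul_pow_four_eq hp
      ha hx (((hv ▸ hvx).coprime_dvd_left ⟨2 * b ^ 2, by ring⟩).coprime_dvd_right hx2) hv
    have : 0 < p * a ^ 4 := by positivity
    have := Nat.le_self_pow four_ne_zero b
    exact ⟨c, d, 2 * b, hc, hd, hcd, by omega⟩
  · obtain ⟨a, b, rfl, hv, hab⟩ := hcop.exists_eq_mul_pow_four (c := 4 * p) (d := 1) (n := w)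
      ((by simpa using h2v.pow_left 2 : Nat.Coprime 4 _).mul_left hpv) (Nat.coprime_one_left _)
      (by simp [hp.ne_zero]) (huv.trans (by ring))
    rw [one_mul] at hv
    have ha : 0 < a := Nat.pos_of_mul_pos_right (hab ▸ hw)
    obtain ⟨c, d, hc, hd, hcd⟩ := exists_pow_four_add_mul_pow_four_eq_sq_of_pow_four_eq hp
      ha (((hv ▸ hvx).coprime_dvd_left (dvd_pow_self b four_ne_zero)).coprime_dvd_right hx2) hv
    have : 0 < 4 * p * a ^ 4 := by positivity
    have := Nat.le_self_pow four_ne_zero b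
    exact ⟨c, d, b, hc, hd, hcd, by omega⟩

theorem exists_lt_of_pow_four_add_mul_pow_four_eq_sq (hp : p.Prime)
    (hmod : p % 16 = 7 ∨ p % 16 = 11) {x y z : ℕ} (hx : 0 < x) (hy : 0 < y)
    (h : x ^ 4 + p * y ^ 4 = z ^ 2) :
    ∃ x' y' z', 0 < x' ∧ 0 < y' ∧ x' ^ 4 + p * y' ^ 4 = z' ^ 2 ∧ z' < z := by
  have hp4 : p % 4 = 3 := by omega
  by_cases hxy : x.Coprime y
  swap
  · exact exists_lt_of_not_coprime hx hy hxy h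
  rcases Nat.even_or_odd x with hx2 | hx2 <;> rcases Nat.even_or_odd y with hy2 | hy2
  · exact (Nat.not_coprime_of_dvd_of_dvd one_lt_two hx2.two_dvd hy2.two_dvd hxy).elim
  · exact (pow_four_add_mul_pow_four_ne_sq_of_even_of_odd hp4 hx2 hy2 h).elim
  · exact exists_lt_of_odd_of_even hp hp4 hy hxy hx2 hy2 h
  · exact (pow_four_add_mul_pow_four_ne_sq_of_odd_of_odd hmod hx2 hy2 h).elim

theorem Nat.pow_four_add_mul_pow_four_ne_sq (hp : p.Prime) (hmod : p % 16 = 7 ∨ p % 16 = 11)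
    {x y z : ℕ} (hx : 0 < x) (hy : 0 < y) : x ^ 4 + p * y ^ 4 ≠ z ^ 2 := by
  induction z using Nat.strong_induction_on generalizing x y with
  | _ z ih =>
    intro h
    obtain ⟨x', y', z', hx', hy', h', hz⟩ :=
      exists_lt_of_pow_four_add_mul_pow_four_eq_sq hp hmod hx hy h
    exact ih z' hz hx' hy' h'

theorem Rat.pow_four_add_mul_pow_four_ne_sq (hp : p.Prime) (hmod : p % 16 = 7 ∨ p % 16 = 11)
    {w t z : ℚ} (hw : w ≠ 0) (ht : t ≠ 0) : w ^ 4 + p * t ^ 4 ≠ z ^ 2 := by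
  intro h
  set D : ℚ := w.den * t.den
  have hsq :
      IsSquare (((w.num.natAbs * t.den) ^ 4 + p * (t.num.natAbs * w.den) ^ 4 : ℕ) : ℚ) := by
    refine ⟨z * D ^ 2, ?_⟩
    have h4 : Even 4 := by decide
    push_cast
    simp only [Nat.cast_natAbs, Int.cast_abs, mul_pow, h4.pow_abs, ← Rat.mul_den_eq_num]
    linear_combination D ^ 4 * h
  obtain ⟨r, hr⟩ := Rat.isSquare_natCast_iff.mp hsq
  exact Nat.pow_four_add_mul_pow_four_ne_sq hp hmod (by positivity) (by positivity)
    (hr.trans (sq r).symm)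

end Descent

section FieldExtension

variable {K : Type*} [Field K]

theorem Polynomial.exists_irreducible_dvd_natDegree_le_half {h : K[X]} (h0 : h ≠ 0)
    (hu : ¬IsUnit h) (hh : ¬Irreducible h) :
    ∃ F : K[X], Irreducible F ∧ F ∣ h ∧ 2 * F.natDegree ≤ h.natDegree := by
  rw [irreducible_iff_lt_natDegree_lt h0 hu] at hh
  push Not at hh
  obtain ⟨q, hq, hdeg, hqh⟩ := hh
  rw [Finset.mem_Ioc] at hdeg
  obtain ⟨F, hF, hFq⟩ :=
    WfDvdMonoid.exists_irreducible_factor (not_isUnit_of_natDegree_pos q hdeg.1) hq.ne_zero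
  refine ⟨F, hF, hFq.trans hqh, ?_⟩
  have := natDegree_le_of_dvd hFq hq.ne_zero
  omega

theorem Polynomial.natDegree_eq_and_exists_aeval_eq_root_of_dvd_comp {f F g : K[X]}
    (hf : Irreducible f) (hF : Irreducible F) (hFg : F ∣ f.comp g)
    (hdeg : F.natDegree ≤ f.natDegree) :
    F.natDegree = f.natDegree ∧ ∃ θ : AdjoinRoot f, aeval θ g = AdjoinRoot.root f := by
  have := Fact.mk hf
  have := Fact.mk hF
  have hα : aeval (aeval (AdjoinRoot.root F) g) f = 0 := by
    rw [← aeval_comp]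
    obtain ⟨Q, hQ⟩ := hFg
    rw [hQ, map_mul, AdjoinRoot.aeval_eq, AdjoinRoot.mk_self, zero_mul]
  let φ := AdjoinRoot.liftAlgHom f (Algebra.ofId K _) _ hα
  let bf := AdjoinRoot.powerBasis hf.ne_zero
  let bF := AdjoinRoot.powerBasis hF.ne_zero
  have := bf.finite
  have := bF.finite
  have hφ : Function.Injective φ := φ.toRingHom.injective
  have hle := LinearMap.finrank_le_finrank_of_injective (f := φ.toLinearMap) hφ
  rw [bf.finrank, bF.finrank] at hle
  have heq : F.natDegree = f.natDegree := le_antisymm hdeg hle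
  obtain ⟨θ, hθ⟩ := (LinearMap.injective_iff_surjective_of_finrank_eq_finrank
    (f := φ.toLinearMap) (by rw [bf.finrank, bF.finrank]; exact heq.symm)).mp hφ (AdjoinRoot.root F)
  refine ⟨heq, θ, hφ ?_⟩
  rw [AlgHom.toLinearMap_apply] at hθ
  rw [← aeval_algHom_apply, hθ]
  exact (AdjoinRoot.liftAlgHom_root ..).symm

theorem Polynomial.sq_two_mul_coeff_add_coeff {A : Type*} [CommRing A] [Algebra K A] {g : K[X]}
    (hg : g.natDegree ≤ 2) (θ : A) :
    (algebraMap K A (2 * g.coeff 2) * θ + algebraMap K A (g.coeff 1)) ^ 2 =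
      algebraMap K A (g.coeff 1 ^ 2 - 4 * g.coeff 2 * g.coeff 0) +
        algebraMap K A (4 * g.coeff 2) * aeval θ g := by
  rw [aeval_eq_sum_range' (Nat.lt_succ_of_le hg)]
  simp only [Finset.sum_range_succ, Finset.sum_range_zero, Algebra.smul_def, map_mul, map_sub,
    map_pow, map_ofNat]
  ring

-- The coefficients of `α`, `α²` and `α³` in `(u + vα + wα² + tα³)² = r + sα` when `α⁴ = -q`.
theorem pow_four_add_mul_pow_four_eq_sq_of_coeffs {q s u v w t : K}
    (h1 : 2 * u * v - 2 * q * w * t = s) (h2 : v ^ 2 + 2 * u * w = q * t ^ 2)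
    (h3 : 2 * u * t + 2 * v * w = 0) (hs : s ≠ 0) :
    w ≠ 0 ∧ t ≠ 0 ∧ w ^ 4 + q * t ^ 4 = (v * t - w ^ 2) ^ 2 := by
  refine ⟨?_, ?_, by linear_combination -t ^ 2 * h2 + w * t * h3⟩
  · rintro rfl
    rcases eq_or_ne t 0 with rfl | ht
    · have hv : v = 0 := pow_eq_zero_iff two_ne_zero |>.mp (by simpa using h2)
      exact hs (by rw [← h1, hv]; ring)
    · have hu : 2 * u = 0 := by
        have : (2 * u) * t = 0 := by linear_combination h3
        exact (mul_eq_zero.mp this).resolve_right ht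
      exact hs (by rw [← h1]; linear_combination v * hu)
  · rintro rfl
    have hvw : v * (2 * w) = 0 := by linear_combination h3
    rcases mul_eq_zero.mp hvw with hv | hw
    · exact hs (by rw [← h1, hv]; ring)
    · have hv : v ^ 2 = 0 := by linear_combination h2 - u * hw
      exact hs (by rw [← h1, pow_eq_zero_iff two_ne_zero |>.mp hv]; ring)

theorem AdjoinRoot.exists_pow_four_add_mul_pow_four_eq_sq {q r s : K} (hs : s ≠ 0)
    {β : AdjoinRoot (X ^ 4 + C q)}
    (hβ : β ^ 2 = algebraMap K _ r + algebraMap K _ s * AdjoinRoot.root (X ^ 4 + C q)) :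
    ∃ w t z : K, w ≠ 0 ∧ t ≠ 0 ∧ w ^ 4 + q * t ^ 4 = z ^ 2 := by
  set α := AdjoinRoot.root (X ^ 4 + C q)
  let B : Module.Basis (Fin 4) K (AdjoinRoot (X ^ 4 + C q)) :=
    (AdjoinRoot.powerBasis' (monic_X_pow_add_C q four_ne_zero)).basis.reindex
      (finCongr natDegree_X_pow_add_C)
  have hB : ∀ i, B i = α ^ (i : ℕ) := by simp [B, α, finCongr]
  have h3 : ((3 : Fin 4) : ℕ) = 3 := rfl
  have hα : α ^ 4 = -algebraMap K _ q := by
    have := AdjoinRoot.eval₂_root (X ^ 4 + C q)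
    simp only [eval₂_add, eval₂_X_pow, eval₂_C] at this
    exact eq_neg_of_add_eq_zero_left this
  have hβB := B.sum_repr β
  set u := B.repr β 0
  set v := B.repr β 1
  set w := B.repr β 2
  set t := B.repr β 3
  have hcoeffs := Fintype.linearIndependent_iff.mp B.linearIndependent
    ![u ^ 2 - q * (w ^ 2 + 2 * v * t) - r, 2 * u * v - 2 * q * w * t - s,
      v ^ 2 + 2 * u * w - q * t ^ 2, 2 * u * t + 2 * v * w] (by
    rw [← hβB] at hβ
    simp only [Fin.sum_univ_four, hB, Algebra.smul_def, Matrix.cons_val_zero, Matrix.cons_val_one,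
      Matrix.cons_val_two, Matrix.cons_val_three, Matrix.head_cons, Matrix.tail_cons, map_sub,
      map_add, map_mul, map_pow, map_ofNat, Fin.val_zero, Fin.val_one, Fin.val_two, h3] at hβ ⊢
    linear_combination hβ - (algebraMap K _ w ^ 2 + 2 * algebraMap K _ v * algebraMap K _ t +
      2 * algebraMap K _ w * algebraMap K _ t * α + algebraMap K _ t ^ 2 * α ^ 2) * hα)
  have e1 : 2 * u * v - 2 * q * w * t - s = 0 := hcoeffs 1
  have e2 : v ^ 2 + 2 * u * w - q * t ^ 2 = 0 := hcoeffs 2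
  obtain ⟨hw, ht, h⟩ := pow_four_add_mul_pow_four_eq_sq_of_coeffs (q := q)
    (by linear_combination e1) (by linear_combination e2) (hcoeffs 3) hs
  exact ⟨w, t, _, hw, ht, h⟩

theorem Irreducible.exists_aeval_eq_root_of_not_irreducible_comp {f g : K[X]}
    (hf : Irreducible f) (hg0 : 0 < g.natDegree) (hg2 : g.natDegree ≤ 2)
    (hfg : ¬Irreducible (f.comp g)) :
    g.natDegree = 2 ∧ ∃ θ : AdjoinRoot f, aeval θ g = AdjoinRoot.root f := by
  have hf0 := hf.natDegree_pos
  have hdeg : (f.comp g).natDegree = f.natDegree * g.natDegree := natDegree_comp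
  have hpos : 0 < (f.comp g).natDegree := hdeg ▸ Nat.mul_pos hf0 hg0
  obtain ⟨F, hF, hFfg, hFdeg⟩ := Polynomial.exists_irreducible_dvd_natDegree_le_half
    (ne_zero_of_natDegree_gt hpos) (not_isUnit_of_natDegree_pos _ hpos) hfg
  have hle : 2 * F.natDegree ≤ 2 * f.natDegree := by
    interval_cases g.natDegree <;> omega
  obtain ⟨hFf, hθ⟩ :=
    Polynomial.natDegree_eq_and_exists_aeval_eq_root_of_dvd_comp hf hF hFfg (by omega)
  refine ⟨?_, hθ⟩
  interval_cases g.natDegree <;> omega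

end FieldExtension

theorem x4_add_p_superirreducible (p : ℕ) (hp : p.Prime)
    (hmod : p % 16 = 7 ∨ p % 16 = 11)
    (hirr : Irreducible (X ^ 4 + C (p : ℚ))) :
    IsSuperirreducible ℚ 2 (X ^ 4 + C (p : ℚ)) := by
  refine ⟨hirr, fun g hg0 hg2 => by_contra fun hfg => ?_⟩
  obtain ⟨hg, θ, hθ⟩ := hirr.exists_aeval_eq_root_of_not_irreducible_comp hg0 hg2 hfg
  have ha : g.coeff 2 ≠ 0 := hg ▸ leadingCoeff_ne_zero.mpr (ne_zero_of_natDegree_gt hg0)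
  obtain ⟨w, t, z, hw, ht, h⟩ := AdjoinRoot.exists_pow_four_add_mul_pow_four_eq_sq
    (mul_ne_zero four_ne_zero ha) ((Polynomial.sq_two_mul_coeff_add_coeff hg2 θ).trans (by rw [hθ]))
  exact Rat.pow_four_add_mul_pow_four_ne_sq hp hmod hw ht h
end

section
/- Let p be a prime number with p ≡ 3 (mod 8) or p ≡ 5 (mod 8). If the polynomial x⁴ + 2p ∈ ℚ[x] is irreducible over ℚ, then it is 2-superirreducible over ℚ. -/
/-
If `f(g)` is reducible for an irreducible quartic `f` and a quadratic `g = aX² + bX + c`, an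
irreducible factor of `f(g)` has degree divisible by 4 and smaller than 8, hence equal to 4. A root
`α` of it and the root `β = g(α)` of `f` then generate the same field, so `α = R(β)` for some
polynomial `R`, i.e. `f ∣ g(R) - X`. Completing the square, `b² - 4ac + 4aβ` is the square of some
`y₀ + y₁β + y₂β² + y₃β³` in `ℚ(β)`. For `f = X⁴ + 2p` the coefficients of `β²` and `β³` give
`y₂⁴ + 2p y₃⁴ = (y₁y₃ - y₂²)²`, and the coefficient of `β` gives `4a = 2(y₀y₁ - 2p y₂y₃)`.

For `p ≡ 3, 5 (mod 8)` the equation `x⁴ + 2p y⁴ = z²` forces `y = 0`, by Fermat descent: a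
primitive solution gives `(z - x²)(z + x²)/4 = 8p (y/2)⁴` with coprime factors, then
`d⁴ = x² + 8p a⁴`, and the same factorisation of `(d² - x)(d² + x)/4 = 2p a⁴` yields a smaller
solution; every other distribution of the factors `2` and `p` is impossible modulo 8. Hence
`y₃ = 0`, then `y₀y₁ = 0 = y₂y₃`, and `a = 0`, a contradiction.
-/

open Polynomial

theorem Nat.exists_eq_mul_pow_four_of_coprime {u w m n k : ℕ} (hm : m ≠ 0) (hn : n ≠ 0)
    (huw : u.Coprime w) (hmw : m.Coprime w) (hnu : n.Coprime u) (h : u * w = m * n * k ^ 4) :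
    ∃ a b, u = m * a ^ 4 ∧ w = n * b ^ 4 ∧ k = a * b := by
  obtain ⟨u', rfl⟩ : m ∣ u := hmw.dvd_of_dvd_mul_right ⟨n * k ^ 4, by rw [h]; ring⟩
  obtain ⟨w', rfl⟩ : n ∣ w := hnu.dvd_of_dvd_mul_left ⟨m * k ^ 4, by rw [h]; ring⟩
  have hk : u' * w' = k ^ 4 :=
    Nat.eq_of_mul_eq_mul_left (Nat.pos_of_ne_zero (mul_ne_zero hm hn)) (by rw [← h]; ring)
  have hco : u'.Coprime w' :=
    (huw.coprime_dvd_left (dvd_mul_left u' m)).coprime_dvd_right (dvd_mul_left w' n)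
  obtain ⟨a, rfl⟩ := exists_eq_pow_of_mul_eq_pow (Nat.isUnit_iff.2 hco) hk
  obtain ⟨b, rfl⟩ :=
    exists_eq_pow_of_mul_eq_pow (Nat.isUnit_iff.2 hco.symm) ((mul_comm _ _).trans hk)
  exact ⟨a, b, rfl, rfl, Nat.pow_left_injective four_ne_zero (by simp only [mul_pow, hk])⟩

theorem Nat.exists_eq_pow_four_mul_of_coprime_of_mul_eq {u w i p k : ℕ} (hp : p.Prime)
    (huw : u.Coprime w) (h : u * w = 2 ^ i * p * k ^ 4) :
    ∃ a b, k = a * b ∧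
      (u = 2 ^ i * p * a ^ 4 ∧ w = b ^ 4 ∨ u = 2 ^ i * a ^ 4 ∧ w = p * b ^ 4 ∨
        u = p * a ^ 4 ∧ w = 2 ^ i * b ^ 4 ∨ u = a ^ 4 ∧ w = 2 ^ i * p * b ^ 4) := by
  have h2i : 2 ^ i ≠ 0 := pow_ne_zero i two_ne_zero
  have hpw (hpu : p ∣ u) : p.Coprime w := (Nat.Prime.coprime_iff_not_dvd hp).2 fun hpw =>
    hp.one_lt.ne' (Nat.eq_one_of_dvd_coprimes huw hpu hpw)
  rcases Nat.even_or_odd u with hu | hu <;> by_cases hpu : p ∣ u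
  · obtain ⟨a, b, rfl, rfl, rfl⟩ := exists_eq_mul_pow_four_of_coprime (k := k)
      (mul_ne_zero h2i hp.ne_zero) one_ne_zero huw
      ((Nat.Coprime.pow_left i (huw.coprime_dvd_left (even_iff_two_dvd.1 hu))).mul_left (hpw hpu))
      (Nat.coprime_one_left u) (by rw [h]; ring)
    exact ⟨a, b, rfl, .inl ⟨rfl, one_mul _⟩⟩
  · obtain ⟨a, b, rfl, rfl, rfl⟩ := exists_eq_mul_pow_four_of_coprime (k := k) h2i hp.ne_zero huw
      (Nat.Coprime.pow_left i (huw.coprime_dvd_left (even_iff_two_dvd.1 hu)))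
      ((Nat.Prime.coprime_iff_not_dvd hp).2 hpu) h
    exact ⟨a, b, rfl, .inr (.inl ⟨rfl, rfl⟩)⟩
  · obtain ⟨a, b, rfl, rfl, rfl⟩ := exists_eq_mul_pow_four_of_coprime (k := k) hp.ne_zero h2i
      huw (hpw hpu) (Nat.Coprime.pow_left i (Nat.coprime_two_left.2 hu)) (by rw [h]; ring)
    exact ⟨a, b, rfl, .inr (.inr (.inl ⟨rfl, rfl⟩))⟩
  · obtain ⟨a, b, rfl, rfl, rfl⟩ := exists_eq_mul_pow_four_of_coprime (k := k) one_ne_zero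
      (mul_ne_zero h2i hp.ne_zero) huw (Nat.coprime_one_left w)
      ((Nat.Coprime.pow_left i (Nat.coprime_two_left.2 hu)).mul_left
        ((Nat.Prime.coprime_iff_not_dvd hp).2 hpu)) (by rw [h]; ring)
    exact ⟨a, b, rfl, .inr (.inr (.inr ⟨one_mul _, rfl⟩))⟩

theorem Nat.exists_eq_add_two_mul_of_sq_eq_sq_add_four_mul {X Z N : ℕ}
    (h : Z ^ 2 = X ^ 2 + 4 * N) : ∃ u, Z = X + 2 * u ∧ u * (u + X) = N := by
  have hle : X ≤ Z := by nlinarith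
  obtain ⟨u, hu⟩ : Even (Z - X) := by
    rw [Nat.even_sub hle, ← Nat.even_pow' two_ne_zero, h, ← Nat.even_pow' (n := 2) two_ne_zero]
    simp [Nat.even_add, parity_simps]
  obtain rfl : Z = X + 2 * u := by omega
  exact ⟨u, rfl, by nlinarith⟩

theorem Nat.coprime_add_of_coprime_add_two_mul {X u : ℕ} (h : X.Coprime (X + 2 * u)) :
    u.Coprime (u + X) :=
  Nat.coprime_self_add_right.2
    ((Nat.coprime_self_add_right.1 h).coprime_dvd_right (dvd_mul_left u 2)).symm

theorem Nat.coprime_of_pow_four_add_two_mul_pow_four_eq_sq {p x y z : ℕ} (hp : p.Prime)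
    (hx : Odd x) (hxy : x.Coprime y) (h : x ^ 4 + 2 * p * y ^ 4 = z ^ 2) : x.Coprime z := by
  refine Nat.coprime_of_dvd fun q hq hqx hqz => ?_
  have hq2 : q ^ 2 ∣ p * (2 * y ^ 4) := by
    have hx4 : q ^ 2 ∣ x ^ 4 := (pow_dvd_pow_of_dvd hqx 2).trans (pow_dvd_pow x (by norm_num))
    rw [show p * (2 * y ^ 4) = 2 * p * y ^ 4 by ring, ← Nat.dvd_add_right hx4, h]
    exact pow_dvd_pow_of_dvd hqz 2
  have hcop : (q ^ 2).Coprime (2 * y ^ 4) := Nat.Coprime.pow_left 2 <|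
    Nat.Coprime.mul_right (Nat.coprime_two_right.2 (hx.of_dvd_nat hqx))
      ((hxy.coprime_dvd_left hqx).pow_right 4)
  rcases hp.eq_one_or_self_of_dvd _ (hcop.dvd_of_dvd_mul_right hq2) with hq1 | hqp
  · exact hq.one_lt.ne' (by simpa using hq1)
  · exact hp.prime.not_isSquare ⟨q, by rw [← hqp, sq]⟩

theorem ZMod.natCast_eq_three_or_five {p : ℕ} (hp : p % 8 = 3 ∨ p % 8 = 5) :
    (p : ZMod 8) = 3 ∨ (p : ZMod 8) = 5 := by
  rw [← ZMod.natCast_mod]; rcases hp with h | h <;> simp [h]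

theorem ZMod.pow_four_eq_zero_or_one (a : ZMod 8) : a ^ 4 = 0 ∨ a ^ 4 = 1 := by
  revert a; decide

theorem ZMod.sq_eq_zero_or_one_or_four (a : ZMod 8) : a ^ 2 = 0 ∨ a ^ 2 = 1 ∨ a ^ 2 = 4 := by
  revert a; decide

theorem ZMod.natCast_sq_eq_one_of_odd {n : ℕ} (hn : Odd n) : (n : ZMod 8) ^ 2 = 1 := by
  obtain ⟨k, rfl⟩ := hn; push_cast; generalize (k : ZMod 8) = a; revert a; decide

theorem ZMod.natCast_pow_four_eq_one_of_odd {n : ℕ} (hn : Odd n) : (n : ZMod 8) ^ 4 = 1 := by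
  rw [show 4 = 2 * 2 from rfl, pow_mul, natCast_sq_eq_one_of_odd hn, one_pow]

theorem ZMod.eight_eq_zero : (8 : ZMod 8) = 0 := rfl

theorem Nat.pow_four_add_two_mul_pow_four_ne_sq {p x y z : ℕ} (hp : p % 8 = 3 ∨ p % 8 = 5)
    (hy : Odd y) : x ^ 4 + 2 * p * y ^ 4 ≠ z ^ 2 := by
  intro h
  have h8 := congrArg (Nat.cast : ℕ → ZMod 8) h
  push_cast [ZMod.natCast_pow_four_eq_one_of_odd hy] at h8
  rcases ZMod.natCast_eq_three_or_five hp with hp | hp <;>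
    rcases ZMod.pow_four_eq_zero_or_one x with hx | hx <;>
    rcases ZMod.sq_eq_zero_or_one_or_four z with hz | hz | hz <;>
    simp [hp, hx, hz] at h8 <;> revert h8 <;> decide

theorem Nat.two_mul_pow_four_add_mul_pow_four_ne_sq {p a b d : ℕ} (hp : p % 8 = 3 ∨ p % 8 = 5)
    (hd : Odd d) : 2 * a ^ 4 + p * b ^ 4 ≠ d ^ 2 := by
  intro h
  have h8 := congrArg (Nat.cast : ℕ → ZMod 8) h
  push_cast [ZMod.natCast_sq_eq_one_of_odd hd] at h8
  rcases ZMod.natCast_eq_three_or_five hp with hp | hp <;>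
    rcases ZMod.pow_four_eq_zero_or_one a with ha | ha <;>
    rcases ZMod.pow_four_eq_zero_or_one b with hb | hb <;>
    simp [hp, ha, hb] at h8 <;> revert h8 <;> decide

theorem Nat.mul_pow_four_ne_eight_mul_pow_four_add_sq {p a b x : ℕ}
    (hp : p % 8 = 3 ∨ p % 8 = 5) (hx : Odd x) : p * b ^ 4 ≠ 8 * a ^ 4 + x ^ 2 := by
  intro h
  have h8 := congrArg (Nat.cast : ℕ → ZMod 8) h
  push_cast [ZMod.natCast_sq_eq_one_of_odd hx, ZMod.eight_eq_zero] at h8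
  rcases ZMod.natCast_eq_three_or_five hp with hp | hp <;>
    rcases ZMod.pow_four_eq_zero_or_one b with hb | hb <;>
    simp [hp, hb] at h8 <;> revert h8 <;> decide

theorem Nat.eight_mul_pow_four_ne_mul_pow_four_add_sq {p a b x : ℕ}
    (hp : p % 8 = 3 ∨ p % 8 = 5) (hx : Odd x) : 8 * b ^ 4 ≠ p * a ^ 4 + x ^ 2 := by
  intro h
  have h8 := congrArg (Nat.cast : ℕ → ZMod 8) h
  push_cast [ZMod.natCast_sq_eq_one_of_odd hx, ZMod.eight_eq_zero] at h8
  rcases ZMod.natCast_eq_three_or_five hp with hp | hp <;>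
    rcases ZMod.pow_four_eq_zero_or_one a with ha | ha <;>
    simp [hp, ha] at h8 <;> revert h8 <;> decide

theorem Nat.eight_mul_mul_pow_four_ne_pow_four_add_sq {p a b x : ℕ} (hx : Odd x) :
    8 * p * b ^ 4 ≠ a ^ 4 + x ^ 2 := by
  intro h
  have h8 := congrArg (Nat.cast : ℕ → ZMod 8) h
  push_cast [ZMod.natCast_sq_eq_one_of_odd hx, ZMod.eight_eq_zero] at h8
  rcases ZMod.pow_four_eq_zero_or_one a with ha | ha <;>
    simp [ha] at h8 <;> revert h8 <;> decide

theorem Nat.exists_pow_four_add_two_mul_pow_four_eq_sq_of_pow_four_eq {p x d a : ℕ}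
    (hp : p.Prime) (hp8 : p % 8 = 3 ∨ p % 8 = 5) (hx : Odd x) (hxd : x.Coprime d)
    (h : d ^ 4 = x ^ 2 + 8 * p * a ^ 4) :
    ∃ x' y', y' ∣ a ∧ x' ^ 4 + 2 * p * y' ^ 4 = d ^ 2 := by
  obtain ⟨s, hds, hst⟩ := exists_eq_add_two_mul_of_sq_eq_sq_add_four_mul (X := x) (Z := d ^ 2)
    (N := 2 * p * a ^ 4) (by rw [← pow_mul, h]; ring)
  have hsum : s + (s + x) = d ^ 2 := by omega
  have hd : Odd d := (Nat.odd_pow_iff two_ne_zero).1 (hds ▸ hx.add_even (even_two_mul s))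
  have hco : s.Coprime (s + x) := coprime_add_of_coprime_add_two_mul (hds ▸ hxd.pow_right 2)
  obtain ⟨c, e, rfl, hcases⟩ := exists_eq_pow_four_mul_of_coprime_of_mul_eq (i := 1) hp hco
    (by rw [hst, pow_one])
  rcases hcases with ⟨hs, ht⟩ | ⟨hs, ht⟩ | ⟨hs, ht⟩ | ⟨hs, ht⟩
  · exact ⟨e, c, dvd_mul_right c e, by rw [← hsum, ht, hs]; ring⟩
  · exact (two_mul_pow_four_add_mul_pow_four_ne_sq (a := c) (b := e) hp8 hd
      (by rw [← hsum, ht, hs]; ring)).elim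
  · exact (two_mul_pow_four_add_mul_pow_four_ne_sq (a := e) (b := c) hp8 hd
      (by rw [← hsum, ht, hs]; ring)).elim
  · exact ⟨c, e, dvd_mul_left e c, by rw [← hsum, ht, hs]; ring⟩

theorem Nat.exists_lt_pow_four_add_two_mul_pow_four_eq_sq {p x y z : ℕ} (hp : p.Prime)
    (hp8 : p % 8 = 3 ∨ p % 8 = 5) (hxy : x.Coprime y) (hy : y ≠ 0)
    (h : x ^ 4 + 2 * p * y ^ 4 = z ^ 2) :
    ∃ x' y' z', 0 < y' ∧ y' < y ∧ x' ^ 4 + 2 * p * y' ^ 4 = z' ^ 2 := by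
  have hy2 : Even y :=
    Nat.not_odd_iff_even.1 fun hy' => pow_four_add_two_mul_pow_four_ne_sq hp8 hy' h
  have hx : Odd x := Nat.coprime_two_left.1 (hxy.symm.coprime_dvd_left (even_iff_two_dvd.1 hy2))
  have hxz := coprime_of_pow_four_add_two_mul_pow_four_eq_sq hp hx hxy h
  obtain ⟨y₁, rfl⟩ := even_iff_two_dvd.1 hy2
  obtain ⟨u, hzu, huw⟩ := exists_eq_add_two_mul_of_sq_eq_sq_add_four_mul (X := x ^ 2) (Z := z)
    (N := 2 ^ 3 * p * y₁ ^ 4) (by rw [← h]; ring)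
  have hco : u.Coprime (u + x ^ 2) := coprime_add_of_coprime_add_two_mul (hzu ▸ hxz.pow_left 2)
  obtain ⟨a, d, rfl, hcases⟩ := exists_eq_pow_four_mul_of_coprime_of_mul_eq hp hco huw
  rcases hcases with ⟨hu, hw⟩ | ⟨hu, hw⟩ | ⟨hu, hw⟩ | ⟨hu, hw⟩
  · have hxd : x.Coprime d := by
      have := Nat.coprime_add_self_left.2 (Nat.coprime_self_add_right.1 hco)
      rw [hw, Nat.coprime_pow_left_iff four_pos, Nat.coprime_pow_right_iff two_pos] at this
      exact this.symm
    obtain ⟨e, c, hca, hc⟩ := exists_pow_four_add_two_mul_pow_four_eq_sq_of_pow_four_eq (a := a)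
      hp hp8 hx hxd (by rw [← hw, hu]; ring)
    have had : a * d ≠ 0 := right_ne_zero_of_mul hy
    have ha : 0 < a := Nat.pos_of_ne_zero (left_ne_zero_of_mul had)
    refine ⟨e, c, d, Nat.pos_of_dvd_of_pos hca ha, ?_, hc⟩
    calc c ≤ a := Nat.le_of_dvd ha hca
      _ ≤ a * d := Nat.le_mul_of_pos_right a (Nat.pos_of_ne_zero (right_ne_zero_of_mul had))
      _ < 2 * (a * d) := by omega
  · exact (mul_pow_four_ne_eight_mul_pow_four_add_sq (a := a) (b := d) hp8 hx
      (by rw [← hw, hu]; ring)).elim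
  · exact (eight_mul_pow_four_ne_mul_pow_four_add_sq (a := a) (b := d) hp8 hx
      (by linarith)).elim
  · exact (eight_mul_mul_pow_four_ne_pow_four_add_sq (p := p) (a := a) (b := d) hx
      (by linarith)).elim

theorem Nat.exists_coprime_pow_four_add_mul_pow_four_eq_sq {m x y z : ℕ} (hy : y ≠ 0)
    (h : x ^ 4 + m * y ^ 4 = z ^ 2) :
    ∃ x' y' z', x'.Coprime y' ∧ y' ≠ 0 ∧ y' ≤ y ∧ x' ^ 4 + m * y' ^ 4 = z' ^ 2 := by
  obtain ⟨x', y', hco, hx, hy'⟩ := Nat.exists_coprime x y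
  set g := x.gcd y
  have hg : 0 < g := Nat.gcd_pos_of_pos_right x (Nat.pos_of_ne_zero hy)
  have hz : (g ^ 2) ^ 2 ∣ z ^ 2 := ⟨x' ^ 4 + m * y' ^ 4, by rw [← h, hx, hy']; ring⟩
  obtain ⟨z', rfl⟩ := (Nat.pow_dvd_pow_iff two_ne_zero).1 hz
  refine ⟨x', y', z', hco, by rintro rfl; simp_all, ?_, ?_⟩
  · exact hy' ▸ Nat.le_mul_of_pos_right y' hg
  · refine Nat.eq_of_mul_eq_mul_left (pow_pos hg 4) ?_
    rw [show g ^ 4 * (x' ^ 4 + m * y' ^ 4) = (x' * g) ^ 4 + m * (y' * g) ^ 4 by ring, ← hx, ← hy',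
      h]
    ring

theorem Nat.eq_zero_of_pow_four_add_two_mul_pow_four_eq_sq {p : ℕ} (hp : p.Prime)
    (hp8 : p % 8 = 3 ∨ p % 8 = 5) {x y z : ℕ} (h : x ^ 4 + 2 * p * y ^ 4 = z ^ 2) : y = 0 := by
  induction y using Nat.strong_induction_on generalizing x z with
  | _ y ih =>
    by_contra hy
    obtain ⟨x', y', z', hco, hy', hy'y, h'⟩ := exists_coprime_pow_four_add_mul_pow_four_eq_sq hy h
    obtain ⟨_, y'', _, hy'', hy''y', h''⟩ :=
      exists_lt_pow_four_add_two_mul_pow_four_eq_sq hp hp8 hco hy' h'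
    exact hy''.ne' (ih y'' (hy''y'.trans_le hy'y) h'')

theorem Rat.eq_zero_of_pow_four_add_mul_pow_four_eq_sq {m : ℕ}
    (hm : ∀ x y z : ℕ, x ^ 4 + m * y ^ 4 = z ^ 2 → y = 0) {u v w : ℚ}
    (h : u ^ 4 + m * v ^ 4 = w ^ 2) : v = 0 := by
  set D : ℚ := u.den * v.den * w.den
  have hD : D ≠ 0 := by positivity
  have hu : ((u.num * (v.den * w.den) : ℤ) : ℚ) = u * D := by
    push_cast; rw [← Rat.mul_den_eq_num]; ring
  have hv : ((v.num * (u.den * w.den) : ℤ) : ℚ) = v * D := by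
    push_cast; rw [← Rat.mul_den_eq_num]; ring
  have hw : ((w.num * w.den * (u.den * v.den) ^ 2 : ℤ) : ℚ) = w * D ^ 2 := by
    push_cast; rw [← Rat.mul_den_eq_num]; ring
  set U := u.num * (v.den * w.den)
  set V := v.num * (u.den * w.den)
  set W := w.num * w.den * (u.den * v.den) ^ 2
  have hZ : U ^ 4 + m * V ^ 4 = W ^ 2 := by
    have : (U : ℚ) ^ 4 + m * (V : ℚ) ^ 4 = (W : ℚ) ^ 2 := by
      rw [hu, hv, hw]; linear_combination D ^ 4 * h
    exact_mod_cast this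
  have hN : U.natAbs ^ 4 + m * V.natAbs ^ 4 = W.natAbs ^ 2 := by
    zify
    rwa [(show Even 4 by decide).pow_abs, (show Even 4 by decide).pow_abs, sq_abs]
  have hV : V = 0 := Int.natAbs_eq_zero.1 (hm _ _ _ hN)
  have : v * D = 0 := by rw [← hv, hV, Int.cast_zero]
  exact (mul_eq_zero.1 this).resolve_right hD

section Polynomials

variable {K : Type*} [Field K]

theorem Polynomial.eq_C_add_C_mul_X_add_C_mul_X_sq_add_C_mul_X_pow_three {P : K[X]}
    (hP : P.natDegree < 4) :
    P = C (P.coeff 0) + C (P.coeff 1) * X + C (P.coeff 2) * X ^ 2 + C (P.coeff 3) * X ^ 3 := by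
  conv_lhs => rw [as_sum_range_C_mul_X_pow' P hP]
  simp [Finset.sum_range_succ]

theorem Polynomial.eq_C_mul_X_sq_add_C_mul_X_add_C {g : K[X]} (hg : g.natDegree = 2) :
    g = C (g.coeff 2) * X ^ 2 + C (g.coeff 1) * X + C (g.coeff 0) := by
  conv_lhs => rw [as_sum_range_C_mul_X_pow' g (show g.natDegree < 3 by omega)]
  simp [Finset.sum_range_succ]; ring

theorem Polynomial.X_pow_four_add_C_dvd_sq_sub {k y₀ y₁ y₂ y₃ d e : K}
    (h : X ^ 4 + C k ∣ (C y₀ + C y₁ * X + C y₂ * X ^ 2 + C y₃ * X ^ 3) ^ 2 - (C d + C e * X)) :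
    2 * y₀ * y₁ - 2 * k * y₂ * y₃ = e ∧ y₁ ^ 2 + 2 * y₀ * y₂ - k * y₃ ^ 2 = 0 ∧
      2 * (y₀ * y₃ + y₁ * y₂) = 0 := by
  set W : Cubic K := ⟨2 * (y₀ * y₃ + y₁ * y₂), y₁ ^ 2 + 2 * y₀ * y₂ - k * y₃ ^ 2,
    2 * y₀ * y₁ - 2 * k * y₂ * y₃ - e, y₀ ^ 2 - k * (y₂ ^ 2 + 2 * y₁ * y₃) - d⟩
  have hW : (C y₀ + C y₁ * X + C y₂ * X ^ 2 + C y₃ * X ^ 3) ^ 2 - (C d + C e * X) =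
      W.toPoly + (X ^ 4 + C k) *
        (C (y₂ ^ 2 + 2 * y₁ * y₃) + C (2 * y₂ * y₃) * X + C (y₃ ^ 2) * X ^ 2) := by
    simp only [W, Cubic.toPoly, map_add, map_sub, map_mul, map_pow, map_ofNat]; ring
  have hW0 : W.toPoly = 0 := by
    refine eq_zero_of_dvd_of_natDegree_lt ((dvd_add_left (dvd_mul_right _ _)).1 (hW ▸ h)) ?_
    rw [natDegree_X_pow_add_C]
    exact natDegree_cubic_le.trans_lt (by norm_num)
  obtain ⟨h3, h2, h1, -⟩ := Cubic.ext_iff.1 ((Cubic.toPoly_eq_zero_iff W).1 hW0)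
  exact ⟨sub_eq_zero.1 h1, h2, h3⟩

theorem mul_eq_of_sq_add_two_mul_eq_of_mul_add_mul_eq_zero {k : K}
    (hk : ∀ u v w : K, u ^ 4 + k * v ^ 4 = w ^ 2 → v = 0) {y₀ y₁ y₂ y₃ : K}
    (h₂ : y₁ ^ 2 + 2 * y₀ * y₂ - k * y₃ ^ 2 = 0) (h₃ : y₀ * y₃ + y₁ * y₂ = 0) :
    y₀ * y₁ = k * y₂ * y₃ := by
  obtain rfl : y₃ = 0 :=
    hk y₂ y₃ (y₁ * y₃ - y₂ ^ 2) (by linear_combination -y₃ ^ 2 * h₂ + 2 * y₂ * y₃ * h₃)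
  rcases mul_eq_zero.1 (by linear_combination h₃ : y₁ * y₂ = 0) with rfl | rfl
  · ring
  · obtain rfl : y₁ = 0 := pow_eq_zero_iff two_ne_zero |>.1 (by linear_combination h₂)
    ring

theorem Polynomial.X_pow_four_add_C_not_dvd_comp_sub_X (h2 : (2 : K) ≠ 0) {k : K}
    (hk : ∀ u v w : K, u ^ 4 + k * v ^ 4 = w ^ 2 → v = 0) {g : K[X]} (hg : g.natDegree = 2)
    (R : K[X]) : ¬X ^ 4 + C k ∣ g.comp R - X := by
  intro h
  have ha : g.coeff 2 ≠ 0 := by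
    simpa [← hg] using leadingCoeff_ne_zero.2 (ne_zero_of_natDegree_gt (hg ▸ two_pos))
  have hg' := eq_C_mul_X_sq_add_C_mul_X_add_C hg
  generalize g.coeff 2 = a at ha hg'
  generalize g.coeff 1 = b at hg'
  generalize g.coeff 0 = c at hg'
  subst hg'
  set f : K[X] := X ^ 4 + C k
  set Y := C (2 * a) * R + C b
  have hY : f ∣ Y ^ 2 - (C (b ^ 2 - 4 * a * c) + C (4 * a) * X) := by
    have key : C (4 * a) * ((C a * X ^ 2 + C b * X + C c).comp R - X) =
        Y ^ 2 - (C (b ^ 2 - 4 * a * c) + C (4 * a) * X) := by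
      simp only [Y, add_comp, mul_comp, C_comp, X_pow_comp, X_comp, map_sub, map_mul,
        map_pow, map_ofNat]
      ring
    exact key ▸ dvd_mul_of_dvd_right h _
  have hY' : f ∣ (Y %ₘ f) ^ 2 - (C (b ^ 2 - 4 * a * c) + C (4 * a) * X) := by
    rw [← sub_add_sub_cancel _ (Y ^ 2), sq_sub_sq]
    exact dvd_add (dvd_mul_of_dvd_right (dvd_modByMonic_sub Y f) _) hY
  have hdeg : (Y %ₘ f).natDegree < 4 := by
    have hf : f.Monic := monic_X_pow_add_C k four_ne_zero
    have hf1 : f ≠ 1 := fun h1 => by simpa [f] using congrArg natDegree h1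
    simpa [f] using natDegree_modByMonic_lt Y hf hf1
  rw [eq_C_add_C_mul_X_add_C_mul_X_sq_add_C_mul_X_pow_three hdeg] at hY'
  obtain ⟨h₁, h₂, h₃⟩ := X_pow_four_add_C_dvd_sq_sub hY'
  have := mul_eq_of_sq_add_two_mul_eq_of_mul_add_mul_eq_zero hk h₂
    ((mul_eq_zero.1 h₃).resolve_left h2)
  refine ha ((mul_eq_zero.1 (?_ : (2 * 2) * a = 0)).resolve_left (mul_ne_zero h2 h2))
  linear_combination -h₁ + 2 * this

section Extension

open IntermediateField

variable {K L : Type*} [Field K] [Field L] [Algebra K L]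

theorem aeval_mem_adjoin_simple (α : L) (g : K[X]) : aeval α g ∈ K⟮α⟯ :=
  algebra_adjoin_le_adjoin K {α} <| by
    rw [Algebra.adjoin_singleton_eq_range_aeval]; exact ⟨g, rfl⟩

theorem IsIntegral.aeval {α : L} (hα : IsIntegral K α) (g : K[X]) : IsIntegral K (aeval α g) :=
  have := adjoin.finiteDimensional hα
  (isIntegral_iff (x := ⟨_, aeval_mem_adjoin_simple α g⟩)).1 (.of_finite K _)

theorem natDegree_minpoly_aeval_dvd {α : L} (hα : IsIntegral K α) (g : K[X]) :
    (minpoly K (aeval α g)).natDegree ∣ (minpoly K α).natDegree := by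
  rw [← adjoin.finrank hα, ← adjoin.finrank (hα.aeval g)]
  exact finrank_dvd_of_le_right (adjoin_simple_le_iff.2 (aeval_mem_adjoin_simple α g))

theorem exists_aeval_aeval_eq_of_natDegree_minpoly_eq {α : L} (hα : IsIntegral K α) {g : K[X]}
    (h : (minpoly K (aeval α g)).natDegree = (minpoly K α).natDegree) :
    ∃ R : K[X], aeval (aeval α g) R = α := by
  have hβ := hα.aeval g
  have := adjoin.finiteDimensional hα
  have hle : K⟮aeval α g⟯ ≤ K⟮α⟯ := adjoin_simple_le_iff.2 (aeval_mem_adjoin_simple α g)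
  have heq := eq_of_le_of_finrank_eq hle (by rw [adjoin.finrank hα, adjoin.finrank hβ, h])
  have hmem : α ∈ (K⟮aeval α g⟯).toSubalgebra := heq ▸ mem_adjoin_simple_self K α
  rwa [adjoin_simple_toSubalgebra_of_isAlgebraic hβ.isAlgebraic,
    Algebra.adjoin_singleton_eq_range_aeval] at hmem

theorem Irreducible.natDegree_minpoly {f : K[X]} (hf : Irreducible f) {β : L}
    (hβ : aeval β f = 0) : (minpoly K β).natDegree = f.natDegree := by
  rw [← minpoly.eq_of_irreducible hf hβ,
    natDegree_mul_C (inv_ne_zero (leadingCoeff_ne_zero.2 hf.ne_zero))]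

theorem Irreducible.dvd_of_aeval_eq_zero {f P : K[X]} (hf : Irreducible f) {β : L}
    (hβ : aeval β f = 0) (hP : aeval β P = 0) : f ∣ P :=
  (dvd_mul_right f _).trans (minpoly.eq_of_irreducible hf hβ ▸ minpoly.dvd K β hP)

end Extension

theorem Irreducible.natDegree_dvd_of_dvd_comp {f g F : K[X]} (hf : Irreducible f)
    (hF : Irreducible F) (hFfg : F ∣ f.comp g) : f.natDegree ∣ F.natDegree := by
  obtain ⟨α, hα⟩ := IsAlgClosed.exists_aeval_eq_zero (AlgebraicClosure K) F
    (degree_pos_of_irreducible hF).ne'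
  have hβ : aeval (aeval α g) f = 0 := by
    rw [← aeval_comp]; exact aeval_eq_zero_of_dvd_aeval_eq_zero hFfg hα
  rw [← hF.natDegree_minpoly hα, ← hf.natDegree_minpoly hβ]
  exact natDegree_minpoly_aeval_dvd (Algebra.IsIntegral.isIntegral α) g

theorem Irreducible.exists_dvd_comp_sub_X_of_dvd_comp {f g F : K[X]} (hf : Irreducible f)
    (hF : Irreducible F) (hFfg : F ∣ f.comp g) (hdeg : F.natDegree = f.natDegree) :
    ∃ R : K[X], f ∣ g.comp R - X := by
  obtain ⟨α, hα⟩ := IsAlgClosed.exists_aeval_eq_zero (AlgebraicClosure K) F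
    (degree_pos_of_irreducible hF).ne'
  have hβ : aeval (aeval α g) f = 0 := by
    rw [← aeval_comp]; exact aeval_eq_zero_of_dvd_aeval_eq_zero hFfg hα
  obtain ⟨R, hR⟩ := exists_aeval_aeval_eq_of_natDegree_minpoly_eq
    (Algebra.IsIntegral.isIntegral α) (g := g)
    (by rw [hF.natDegree_minpoly hα, hf.natDegree_minpoly hβ, hdeg])
  exact ⟨R, hf.dvd_of_aeval_eq_zero hβ (by simp [aeval_comp, hR])⟩

theorem exists_irreducible_dvd_natDegree_lt {P : K[X]} (hP : 0 < P.natDegree)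
    (h : ¬Irreducible P) :
    ∃ F, Irreducible F ∧ F ∣ P ∧ F.natDegree < P.natDegree := by
  obtain ⟨F, hF, G, rfl⟩ := WfDvdMonoid.exists_irreducible_factor
    (not_isUnit_of_natDegree_pos P hP) (ne_zero_of_natDegree_gt hP)
  have hG : G ≠ 0 := right_ne_zero_of_mul (ne_zero_of_natDegree_gt hP)
  refine ⟨F, hF, dvd_mul_right F G, ?_⟩
  rw [natDegree_mul hF.ne_zero hG, Nat.lt_add_right_iff_pos]
  refine Nat.pos_of_ne_zero fun hG0 => h ?_
  obtain ⟨c, rfl⟩ := natDegree_eq_zero.1 hG0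
  exact (irreducible_mul_isUnit (isUnit_C.2 (by simpa using hG))).2 hF

theorem exists_dvd_comp_sub_X_of_not_irreducible_comp {f g : K[X]} (hf : Irreducible f)
    (hg0 : 0 < g.natDegree) (hg2 : g.natDegree ≤ 2) (h : ¬Irreducible (f.comp g)) :
    g.natDegree = 2 ∧ ∃ R : K[X], f ∣ g.comp R - X := by
  have hf0 : 0 < f.natDegree := hf.natDegree_pos
  obtain ⟨F, hF, hFfg, hlt⟩ := exists_irreducible_dvd_natDegree_lt
    (by rw [natDegree_comp]; exact Nat.mul_pos hf0 hg0) h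
  obtain ⟨m, hm⟩ := hf.natDegree_dvd_of_dvd_comp hF hFfg
  rw [natDegree_comp, hm] at hlt
  have hm0 : m ≠ 0 := by rintro rfl; simp [hF.natDegree_pos.ne'] at hm
  have hmg := Nat.lt_of_mul_lt_mul_left hlt
  obtain rfl : m = 1 := by omega
  exact ⟨by omega, hf.exists_dvd_comp_sub_X_of_dvd_comp hF hFfg (by rw [hm, mul_one])⟩

end Polynomials

theorem x4_add_2p_superirreducible (p : ℕ) (hp : p.Prime)
    (hmod : p % 8 = 3 ∨ p % 8 = 5)
    (hirr : Irreducible (X ^ 4 + C (2 * p : ℚ))) :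
    IsSuperirreducible ℚ 2 (X ^ 4 + C (2 * p : ℚ)) := by
  refine ⟨hirr, fun g hg0 hg2 => by_contra fun hred => ?_⟩
  obtain ⟨hg, R, hR⟩ := exists_dvd_comp_sub_X_of_not_irreducible_comp hirr hg0 hg2 hred
  have hk (u v w : ℚ) (h : u ^ 4 + (2 * p : ℚ) * v ^ 4 = w ^ 2) : v = 0 :=
    Rat.eq_zero_of_pow_four_add_mul_pow_four_eq_sq (m := 2 * p)
      (fun _ _ _ => Nat.eq_zero_of_pow_four_add_two_mul_pow_four_eq_sq hp hmod)
      (by exact_mod_cast h)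
  exact X_pow_four_add_C_not_dvd_comp_sub_X two_ne_zero hk hg R hR
end
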